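/- arXiv:1306.2868 — 8 statements merged into one kernel-verified Lean document; each statement's English description precedes it below -/
import Mathlib

section
/- Let μ be a probability measure on a measurable space Ω and let Φ(x) = x²/log(e+|x|). There exists a universal constant C > 0 (independent of Ω, μ and f) such that for every measurable f : Ω → ℝ with ‖f‖_{Φ;μ} < ∞ one has ∫_{r=1}^{2} ‖f‖_{L^r(μ)}² dr ≤ C · ‖f‖_{Φ;μ}², where ‖f‖_{L^r(μ)} = (∫ |f|^r dμ)^{1/r}. -/
open MeasureTheory Real
open scoped ENNReal

/-- The function `Φ(x) = x² / log(e + |x|)`. -/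
noncomputable def Phi (x : ℝ) : ℝ := x ^ 2 / Real.log (Real.exp 1 + |x|)

lemma one_le_logE (c : ℝ) : 1 ≤ Real.log (Real.exp 1 + |c|) := by
  calc (1:ℝ) = Real.log (Real.exp 1) := (Real.log_exp 1).symm
    _ ≤ Real.log (Real.exp 1 + |c|) :=
      Real.log_le_log (Real.exp_pos 1) (le_add_of_nonneg_right (abs_nonneg c))

lemma Phi_nonneg (c : ℝ) : 0 ≤ Phi c := by
  have := one_le_logE c
  unfold Phi
  positivity

lemma Phi_abs (c : ℝ) : Phi |c| = Phi c := by
  unfold Phi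
  rw [abs_abs, sq_abs]

lemma measurable_Phi : Measurable Phi := by
  unfold Phi
  exact (measurable_id.pow_const 2).div
    (Real.measurable_log.comp (measurable_const.add measurable_abs))

lemma log_le_div_e {y : ℝ} (hy : 0 < y) : Real.log y ≤ y / Real.exp 1 := by
  have h := Real.log_le_sub_one_of_pos (show 0 < y / Real.exp 1 by positivity)
  rw [Real.log_div hy.ne' (Real.exp_ne_zero 1), Real.log_exp] at h
  have he : (2:ℝ) < Real.exp 1 := by
    have := Real.exp_one_gt_d9; linarith
  nlinarith

lemma claim2 {t c : ℝ} (ht : 0 < t) (ht1 : t ≤ 1) (h1 : 1 < c) :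
    t * Real.log (Real.exp 1 + c) ≤ 2 * c ^ t := by
  have hcpos : (0:ℝ) < c := by linarith
  have he2 : (2.7:ℝ) < Real.exp 1 := by have := Real.exp_one_gt_d9; linarith
  have he3 : Real.exp 1 < 3 := by have := Real.exp_one_lt_d9; linarith
  have hepos : (0:ℝ) < Real.exp 1 := Real.exp_pos 1
  have hctpos : 0 < c ^ t := Real.rpow_pos_of_pos hcpos t
  have hct1 : (1:ℝ) ≤ c ^ t := Real.one_le_rpow h1.le ht.le
  have hlog4 : Real.log (Real.exp 1 + c) ≤ Real.log 4 + Real.log c := by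
    have h4c : Real.exp 1 + c ≤ 4 * c := by nlinarith
    calc Real.log (Real.exp 1 + c) ≤ Real.log (4 * c) := Real.log_le_log (by positivity) h4c
      _ = Real.log 4 + Real.log c := Real.log_mul (by norm_num) hcpos.ne'
  have hlogc : t * Real.log c ≤ c ^ t / Real.exp 1 := by
    have h := log_le_div_e hctpos
    rwa [Real.log_rpow hcpos] at h
  have hlog4' : Real.log 4 ≤ 4 / Real.exp 1 := log_le_div_e (by norm_num)
  have hl4 : 0 ≤ Real.log 4 := Real.log_nonneg (by norm_num)
  have h0 : t * Real.log (Real.exp 1 + c) ≤ t * Real.log 4 + t * Real.log c := by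
    nlinarith [mul_le_mul_of_nonneg_left hlog4 ht.le]
  have h1' : t * Real.log 4 ≤ Real.log 4 := by nlinarith
  have e1 : Real.log 4 ≤ 4 / Real.exp 1 * c ^ t := by
    nlinarith [mul_le_mul_of_nonneg_left hct1 (show (0:ℝ) ≤ 4 / Real.exp 1 by positivity)]
  have e2 : c ^ t / Real.exp 1 = 1 / Real.exp 1 * c ^ t := by ring
  have e3 : 4 / Real.exp 1 * c ^ t + 1 / Real.exp 1 * c ^ t ≤ 2 * c ^ t := by
    have h5 : 4 / Real.exp 1 + 1 / Real.exp 1 ≤ 2 := by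
      rw [← add_div, div_le_iff₀ hepos]; nlinarith
    nlinarith
  nlinarith

lemma lemA {s c : ℝ} (hs1 : 1 ≤ s) (hs2 : s < 2) (hc : 0 ≤ c) :
    c ^ s ≤ 2 / (2 - s) * Phi c + 1 := by
  have ht : 0 < 2 - s := by linarith
  rcases le_or_gt c 1 with h1 | h1
  · have h2 : c ^ s ≤ 1 := Real.rpow_le_one hc h1 (by linarith)
    have h3 : 0 ≤ 2 / (2 - s) * Phi c := mul_nonneg (by positivity) (Phi_nonneg c)
    linarith
  · have hcpos : 0 < c := by linarith
    have habs : |c| = c := abs_of_pos hcpos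
    have he2 : (2:ℝ) < Real.exp 1 := by have := Real.exp_one_gt_d9; linarith
    have he3 : Real.exp 1 < 3 := by have := Real.exp_one_lt_d9; linarith
    set t := 2 - s with htdef
    have hctpos : 0 < c ^ t := Real.rpow_pos_of_pos hcpos t
    have hct1 : (1:ℝ) ≤ c ^ t := Real.one_le_rpow h1.le ht.le
    set L := Real.log (Real.exp 1 + c) with hLdef
    have hL1 : (1:ℝ) ≤ L := by
      have := one_le_logE c; rwa [habs] at this
    have claim : t * L ≤ 2 * c ^ t := by
      have ht1 : t ≤ 1 := by simp only [htdef]; linarith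
      simpa [hLdef] using claim2 ht ht1 h1
    -- conclude
    have h2 : c ^ s * c ^ t = c ^ (2:ℕ) := by
      rw [← Real.rpow_add hcpos, ← Real.rpow_natCast c 2]
      norm_num [htdef]
    have hLpos : 0 < L := by linarith
    have hcspos : 0 < c ^ s := Real.rpow_pos_of_pos hcpos s
    have hmain : c ^ s ≤ 2 * c ^ 2 / (t * L) := by
      rw [le_div_iff₀ (by positivity)]
      calc c ^ s * (t * L) ≤ c ^ s * (2 * c ^ t) := by nlinarith
        _ = 2 * c ^ (2:ℕ) := by rw [← h2]; ring
    have hPhi : Phi c = c ^ 2 / L := by unfold Phi; rw [habs]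
    have hrw : 2 * c ^ 2 / (t * L) = 2 / t * (c ^ 2 / L) := by
      field_simp
    rw [hPhi]
    have : 0 ≤ (1:ℝ) := zero_le_one
    rw [hrw] at hmain
    linarith

lemma pow53 {t : ℝ} (ht : 0 < t) (ht1 : t ≤ 1) : (3 / t) ^ t ≤ 5 := by
  have hb : (0:ℝ) < 3 / t := by positivity
  have hepos : (0:ℝ) < Real.exp 1 := Real.exp_pos 1
  have he2 : (2.7:ℝ) < Real.exp 1 := by have := Real.exp_one_gt_d9; linarith
  rw [Real.rpow_def_of_pos hb]
  have hlog : Real.log (3 / t) = Real.log 3 - Real.log t := Real.log_div (by norm_num) ht.ne'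
  have e2 : -(t * Real.log t) ≤ 1 / Real.exp 1 := by
    have h := log_le_div_e (show (0:ℝ) < 1 / t by positivity)
    rw [one_div, Real.log_inv] at h
    have := mul_le_mul_of_nonneg_left h ht.le
    have ht' : t * (t⁻¹ / Real.exp 1) = 1 / Real.exp 1 := by
      field_simp
    nlinarith
  have e1 : t * Real.log 3 ≤ Real.log 3 := by
    have hl3 : 0 ≤ Real.log 3 := Real.log_nonneg (by norm_num)
    nlinarith
  have e3 : Real.log 3 + 1 / Real.exp 1 ≤ Real.log 5 := by
    have h35 : Real.log (3 / 5) ≤ 3 / 5 - 1 := Real.log_le_sub_one_of_pos (by norm_num)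
    rw [Real.log_div (by norm_num) (by norm_num)] at h35
    have hinv : 1 / Real.exp 1 ≤ 2 / 5 := by
      rw [div_le_div_iff₀ hepos (by norm_num)]; nlinarith
    linarith
  calc Real.exp (Real.log (3 / t) * t) ≤ Real.exp (Real.log 5) := by
        apply Real.exp_le_exp.2
        rw [hlog]
        nlinarith
    _ = 5 := Real.exp_log (by norm_num)

lemma lemKey {s I : ℝ} (hs1 : 1 ≤ s) (hs2 : s < 2) (hI0 : 0 ≤ I)
    (hI : I ≤ 3 / (2 - s)) : (I ^ (1 / s)) ^ 2 ≤ 5 * I := by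
  have hs0 : 0 < s := by linarith
  have ht : 0 < 2 - s := by linarith
  have h1 : (I ^ (1 / s)) ^ 2 = I ^ (2 / s) := by
    rw [← Real.rpow_natCast (I ^ (1 / s)) 2, ← Real.rpow_mul hI0]
    congr 1
    push_cast
    field_simp
  rw [h1]
  rcases eq_or_lt_of_le hI0 with hI0' | hIpos
  · rw [← hI0', Real.zero_rpow (by positivity)]
    linarith
  rcases le_or_gt I 1 with hle | hgt
  · have h2 : I ^ (2 / s) ≤ I ^ (1:ℝ) :=
      Real.rpow_le_rpow_of_exponent_ge hIpos hle (by rw [le_div_iff₀ hs0]; linarith)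
    rw [Real.rpow_one] at h2
    linarith
  · have h2 : I ^ (2 / s) = I * I ^ ((2 - s) / s) := by
      have he : (2:ℝ) / s = 1 + (2 - s) / s := by field_simp; ring
      rw [he, Real.rpow_add hIpos, Real.rpow_one]
    have h3 : I ^ ((2 - s) / s) ≤ (3 / (2 - s)) ^ ((2 - s) / s) :=
      Real.rpow_le_rpow hI0 hI (by positivity)
    have hbase : (1:ℝ) ≤ 3 / (2 - s) := by rw [le_div_iff₀ ht]; linarith
    have h4 : (3 / (2 - s)) ^ ((2 - s) / s) ≤ (3 / (2 - s)) ^ (2 - s) :=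
      Real.rpow_le_rpow_of_exponent_le hbase (div_le_self ht.le hs1)
    have h5 : (3 / (2 - s)) ^ (2 - s) ≤ 5 := pow53 ht (by linarith)
    calc I ^ (2 / s) = I * I ^ ((2 - s) / s) := h2
      _ ≤ I * 5 := by
          apply mul_le_mul_of_nonneg_left _ hI0
          linarith
      _ = 5 * I := mul_comm _ _

lemma lemB {c : ℝ} (hc : 0 ≤ c) :
    ∫⁻ s in Set.Ioc (1:ℝ) 2, ENNReal.ofReal (c ^ s) ≤ ENNReal.ofReal (2 * Phi c + 9) := by
  have hPhi0 : 0 ≤ Phi c := Phi_nonneg c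
  rcases le_or_gt c 3 with h3 | h3
  · have hb : ∫⁻ s in Set.Ioc (1:ℝ) 2, ENNReal.ofReal (c ^ s)
        ≤ ∫⁻ _ in Set.Ioc (1:ℝ) 2, ENNReal.ofReal 9 := by
      apply lintegral_mono_ae
      filter_upwards [ae_restrict_mem measurableSet_Ioc] with s hs
      apply ENNReal.ofReal_le_ofReal
      rcases le_or_gt c 1 with h1 | h1
      · exact (Real.rpow_le_one hc h1 (by linarith [hs.1])).trans (by norm_num)
      · calc c ^ s ≤ c ^ (2:ℝ) := Real.rpow_le_rpow_of_exponent_le h1.le hs.2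
          _ = c ^ (2:ℕ) := by rw [← Real.rpow_natCast c 2]; norm_num
          _ ≤ 9 := by nlinarith
    refine hb.trans ?_
    rw [setLIntegral_const, Real.volume_Ioc]
    calc ENNReal.ofReal 9 * ENNReal.ofReal (2 - 1)
        = ENNReal.ofReal 9 := by norm_num
      _ ≤ ENNReal.ofReal (2 * Phi c + 9) := ENNReal.ofReal_le_ofReal (by linarith)
  · -- c > 3
    have hcpos : (0:ℝ) < c := by linarith
    have he3 : Real.exp 1 < 3 := by have := Real.exp_one_lt_d9; linarith
    have hL : 1 < Real.log c := by
      rw [← Real.log_exp 1]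
      exact Real.log_lt_log (Real.exp_pos 1) (by linarith)
    have hLpos : (0:ℝ) < Real.log c := by linarith
    have hfeq : (fun s : ℝ => c ^ s) = fun s => Real.exp (Real.log c * s) := by
      funext s
      rw [Real.rpow_def_of_pos hcpos]
    have hcont : Continuous fun s : ℝ => c ^ s := by
      rw [hfeq]
      exact Real.continuous_exp.comp (continuous_const.mul continuous_id)
    have hInt : IntegrableOn (fun s : ℝ => c ^ s) (Set.Ioc (1:ℝ) 2) :=
      hcont.integrableOn_Ioc
    have heval : ∫ s in Set.Ioc (1:ℝ) 2, c ^ s = (c ^ (2:ℕ) - c) / Real.log c := by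
      rw [← intervalIntegral.integral_of_le (by norm_num : (1:ℝ) ≤ 2)]
      have hderiv : ∀ s ∈ Set.uIcc (1:ℝ) 2,
          HasDerivAt (fun u : ℝ => c ^ u / Real.log c) (c ^ s) s := by
        intro s _
        have h1 : HasDerivAt (fun u : ℝ => Real.log c * u) (Real.log c) s := by
          simpa using (hasDerivAt_id s).const_mul (Real.log c)
        have h2 : HasDerivAt (fun u : ℝ => Real.exp (Real.log c * u))
            (Real.exp (Real.log c * s) * Real.log c) s := (Real.hasDerivAt_exp _).comp s h1
        have h3 := h2.div_const (Real.log c)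
        have h4 : Real.exp (Real.log c * s) * Real.log c / Real.log c
            = Real.exp (Real.log c * s) := by field_simp
        rw [h4] at h3
        have h5 : (fun u : ℝ => Real.exp (Real.log c * u) / Real.log c)
            = fun u : ℝ => c ^ u / Real.log c := by
          funext u; rw [Real.rpow_def_of_pos hcpos]
        rw [h5] at h3
        rw [Real.rpow_def_of_pos hcpos]
        exact h3
      rw [intervalIntegral.integral_eq_sub_of_hasDerivAt hderiv
        (hcont.intervalIntegrable 1 2)]
      rw [Real.rpow_one]
      have : c ^ (2:ℝ) = c ^ (2:ℕ) := by rw [← Real.rpow_natCast c 2]; norm_num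
      rw [this]
      ring
    have hnn : 0 ≤ᵐ[volume.restrict (Set.Ioc (1:ℝ) 2)] fun s : ℝ => c ^ s :=
      Filter.Eventually.of_forall fun s => Real.rpow_nonneg hc s
    rw [← MeasureTheory.ofReal_integral_eq_lintegral_ofReal hInt hnn]
    apply ENNReal.ofReal_le_ofReal
    rw [heval]
    -- (c² - c)/log c ≤ 2 * Phi c + 9
    have hlog2 : Real.log (Real.exp 1 + c) ≤ 2 * Real.log c := by
      have hup : Real.exp 1 + c ≤ c ^ (2:ℕ) := by nlinarith
      calc Real.log (Real.exp 1 + c) ≤ Real.log (c ^ (2:ℕ)) :=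
            Real.log_le_log (by positivity) hup
        _ = 2 * Real.log c := by rw [Real.log_pow]; norm_num
    have hLe : Real.log (Real.exp 1 + c) > 0 := by
      have := one_le_logE c
      rw [abs_of_pos hcpos] at this
      linarith
    have hPhi : Phi c = c ^ 2 / Real.log (Real.exp 1 + c) := by
      unfold Phi; rw [abs_of_pos hcpos]
    have key : (c ^ (2:ℕ) - c) / Real.log c ≤ 2 * (c ^ 2 / Real.log (Real.exp 1 + c)) := by
      rw [div_le_iff₀ hLpos]
      have h1 : 2 * (c ^ 2 / Real.log (Real.exp 1 + c)) * Real.log c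
          = 2 * c ^ 2 * (Real.log c / Real.log (Real.exp 1 + c)) := by ring
      rw [h1]
      have h2 : (1:ℝ) / 2 ≤ Real.log c / Real.log (Real.exp 1 + c) := by
        rw [div_le_div_iff₀ (by norm_num) hLe]
        linarith
      nlinarith
    rw [hPhi]
    linarith

lemma mainLem {Ω : Type*} [MeasurableSpace Ω] (μ : Measure Ω) [IsProbabilityMeasure μ]
    (f : Ω → ℝ) (hf : Measurable f)
    (hΦ : ∫⁻ x, ENNReal.ofReal (Phi (f x)) ∂μ ≤ 1) :
    ∫ s in (1:ℝ)..2, ((∫ x, |f x| ^ s ∂μ) ^ (1 / s)) ^ 2 ≤ 55 := by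
  have hg : Measurable fun x => |f x| := hf.abs
  set J : ℝ → ℝ≥0∞ := fun s => ∫⁻ x, ENNReal.ofReal (|f x| ^ s) ∂μ with hJdef
  have hum : Measurable (Function.uncurry fun (s : ℝ) (x : Ω) =>
      ENNReal.ofReal (|f x| ^ s)) := by
    apply Measurable.ennreal_ofReal
    exact (hg.comp measurable_snd).pow measurable_fst
  have hJmeas : Measurable J := hum.lintegral_prod_right
  have hΦg : ∫⁻ x, ENNReal.ofReal (Phi |f x|) ∂μ ≤ 1 := by
    simpa only [Phi_abs] using hΦ
  have hPhim : Measurable fun x => ENNReal.ofReal (Phi |f x|) :=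
    (measurable_Phi.comp hg).ennreal_ofReal
  -- step 1
  have hJle : ∀ s, 1 ≤ s → s < 2 → J s ≤ ENNReal.ofReal (3 / (2 - s)) := by
    intro s hs1 hs2
    have ht : 0 < 2 - s := by linarith
    have hc1 : (0:ℝ) ≤ 2 / (2 - s) := by positivity
    calc J s ≤ ∫⁻ x, (ENNReal.ofReal (2 / (2 - s)) * ENNReal.ofReal (Phi |f x|) + 1) ∂μ := by
          apply lintegral_mono
          intro x
          calc ENNReal.ofReal (|f x| ^ s)
              ≤ ENNReal.ofReal (2 / (2 - s) * Phi |f x| + 1) :=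
                ENNReal.ofReal_le_ofReal (lemA hs1 hs2 (abs_nonneg (f x)))
            _ = ENNReal.ofReal (2 / (2 - s)) * ENNReal.ofReal (Phi |f x|) + 1 := by
                rw [ENNReal.ofReal_add (mul_nonneg hc1 (Phi_nonneg _)) zero_le_one,
                  ENNReal.ofReal_mul hc1, ENNReal.ofReal_one]
      _ = ENNReal.ofReal (2 / (2 - s)) * (∫⁻ x, ENNReal.ofReal (Phi |f x|) ∂μ) + 1 := by
          rw [lintegral_add_right _ measurable_const, lintegral_const_mul _ hPhim,
            lintegral_const, measure_univ, mul_one]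
      _ ≤ ENNReal.ofReal (2 / (2 - s)) * 1 + 1 := by gcongr
      _ = ENNReal.ofReal (2 / (2 - s)) + ENNReal.ofReal 1 := by
          rw [mul_one, ENNReal.ofReal_one]
      _ = ENNReal.ofReal (2 / (2 - s) + 1) := (ENNReal.ofReal_add hc1 zero_le_one).symm
      _ ≤ ENNReal.ofReal (3 / (2 - s)) := by
          apply ENNReal.ofReal_le_ofReal
          have h1 : (1:ℝ) ≤ 1 / (2 - s) := by rw [le_div_iff₀ ht]; linarith
          have h2 : 2 / (2 - s) + 1 / (2 - s) = 3 / (2 - s) := by ring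
          linarith
  -- integral = toReal of lintegral
  have hIeq : ∀ s : ℝ, ∫ x, |f x| ^ s ∂μ = (J s).toReal := by
    intro s
    rw [MeasureTheory.integral_eq_lintegral_of_nonneg_ae
      (Filter.Eventually.of_forall fun x => Real.rpow_nonneg (abs_nonneg _) s)
      ((hg.pow measurable_const).aestronglyMeasurable)]
  have hhm : Measurable fun s : ℝ => (((J s).toReal) ^ (1 / s)) ^ 2 :=
    ((hJmeas.ennreal_toReal).pow ((measurable_const).div measurable_id)).pow_const 2
  simp only [hIeq]
  rw [intervalIntegral.integral_of_le (by norm_num : (1:ℝ) ≤ 2)]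
  rw [MeasureTheory.integral_eq_lintegral_of_nonneg_ae
    (Filter.Eventually.of_forall fun s => by positivity) hhm.aestronglyMeasurable]
  have hae : ∀ᵐ s ∂(volume.restrict (Set.Ioc (1:ℝ) 2)),
      ENNReal.ofReal ((((J s).toReal) ^ (1 / s)) ^ 2) ≤ 5 * J s := by
    have h2 : ∀ᵐ s ∂(volume.restrict (Set.Ioc (1:ℝ) 2)), s ≠ 2 := by
      refine ae_restrict_of_ae ?_
      rw [ae_iff]
      have : {s : ℝ | ¬s ≠ 2} = {2} := by ext s; simp
      rw [this]
      exact Real.volume_singleton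
    filter_upwards [ae_restrict_mem measurableSet_Ioc, h2] with s hs hs2
    have hs1 : 1 ≤ s := hs.1.le
    have hs2' : s < 2 := lt_of_le_of_ne hs.2 hs2
    have hfin : J s ≠ ⊤ :=
      (lt_of_le_of_lt (hJle s hs1 hs2') ENNReal.ofReal_lt_top).ne
    have hIle : (J s).toReal ≤ 3 / (2 - s) :=
      ENNReal.toReal_le_of_le_ofReal
        (by have h25 : (0:ℝ) < 2 - s := by linarith
            positivity) (hJle s hs1 hs2')
    have hkey := lemKey hs1 hs2' ENNReal.toReal_nonneg hIle
    calc ENNReal.ofReal ((((J s).toReal) ^ (1 / s)) ^ 2)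
        ≤ ENNReal.ofReal (5 * (J s).toReal) := ENNReal.ofReal_le_ofReal hkey
      _ = ENNReal.ofReal 5 * ENNReal.ofReal ((J s).toReal) :=
          ENNReal.ofReal_mul (by norm_num)
      _ = 5 * J s := by
          rw [ENNReal.ofReal_toReal hfin, ENNReal.ofReal_ofNat]
  have hswap : ∫⁻ s in Set.Ioc (1:ℝ) 2, J s
      = ∫⁻ x, (∫⁻ s in Set.Ioc (1:ℝ) 2, ENNReal.ofReal (|f x| ^ s)) ∂μ :=
    lintegral_lintegral_swap hum.aemeasurable
  have htot : ∫⁻ s in Set.Ioc (1:ℝ) 2, J s ≤ 11 := by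
    rw [hswap]
    calc ∫⁻ x, (∫⁻ s in Set.Ioc (1:ℝ) 2, ENNReal.ofReal (|f x| ^ s)) ∂μ
        ≤ ∫⁻ x, ENNReal.ofReal (2 * Phi |f x| + 9) ∂μ :=
          lintegral_mono fun x => lemB (abs_nonneg _)
      _ = ∫⁻ x, (ENNReal.ofReal 2 * ENNReal.ofReal (Phi |f x|) + ENNReal.ofReal 9) ∂μ := by
          congr 1
          funext x
          rw [ENNReal.ofReal_add (by nlinarith [Phi_nonneg |f x|]) (by norm_num),
            ENNReal.ofReal_mul (by norm_num)]
      _ = ENNReal.ofReal 2 * (∫⁻ x, ENNReal.ofReal (Phi |f x|) ∂μ) + ENNReal.ofReal 9 := by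
          rw [lintegral_add_right _ measurable_const, lintegral_const_mul _ hPhim,
            lintegral_const, measure_univ, mul_one]
      _ ≤ ENNReal.ofReal 2 * 1 + ENNReal.ofReal 9 := by gcongr
      _ = 11 := by
          rw [mul_one, ENNReal.ofReal_ofNat, ENNReal.ofReal_ofNat]
          norm_num
  have hfinal : ∫⁻ s in Set.Ioc (1:ℝ) 2,
      ENNReal.ofReal ((((J s).toReal) ^ (1 / s)) ^ 2) ≤ 55 := by
    calc ∫⁻ s in Set.Ioc (1:ℝ) 2, ENNReal.ofReal ((((J s).toReal) ^ (1 / s)) ^ 2)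
        ≤ ∫⁻ s in Set.Ioc (1:ℝ) 2, 5 * J s := lintegral_mono_ae hae
      _ = 5 * ∫⁻ s in Set.Ioc (1:ℝ) 2, J s := lintegral_const_mul 5 hJmeas
      _ ≤ 5 * 11 := by gcongr
      _ = 55 := by norm_num
  calc (∫⁻ s in Set.Ioc (1:ℝ) 2,
      ENNReal.ofReal ((((J s).toReal) ^ (1 / s)) ^ 2)).toReal
      ≤ (55 : ℝ≥0∞).toReal := ENNReal.toReal_mono (by norm_num) hfinal
    _ = 55 := by norm_num


/-- The Orlicz (Luxemburg) norm `‖f‖_{φ;μ} = inf {a > 0 : ∫ φ(f/a) dμ ≤ 1}`,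
valued in `[0,∞]` (it is `∞` when no such `a` exists). -/
noncomputable def orliczNorm {Ω : Type*} [MeasurableSpace Ω] (μ : Measure Ω)
    (φ : ℝ → ℝ) (f : Ω → ℝ) : ℝ≥0∞ :=
  sInf {a : ℝ≥0∞ | ∃ r : ℝ, 0 < r ∧ a = ENNReal.ofReal r ∧
    ∫⁻ x, ENNReal.ofReal (φ (f x / r)) ∂μ ≤ 1}

/-- There is a universal constant `C > 0` such that for every probability space and every
measurable `f` with finite Orlicz norm, `∫₁² ‖f‖_{L^r(μ)}² dr ≤ C ‖f‖_{Φ;μ}²`. -/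
theorem stmt0 :
    ∃ C : ℝ, 0 < C ∧
      ∀ (Ω : Type*) [MeasurableSpace Ω] (μ : Measure Ω) [IsProbabilityMeasure μ]
        (f : Ω → ℝ), Measurable f → orliczNorm μ Phi f < ⊤ →
        ∫ r in (1:ℝ)..2, ((∫ x, |f x| ^ r ∂μ) ^ (1 / r)) ^ 2 ≤
          C * (orliczNorm μ Phi f).toReal ^ 2 := by
  refine ⟨55, by norm_num, ?_⟩
  intro Ω _ μ _ f hf hfin
  set a := (orliczNorm μ Phi f).toReal with ha
  have ha0 : 0 ≤ a := ENNReal.toReal_nonneg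
  have key : ∀ ε : ℝ, 0 < ε →
      ∫ s in (1:ℝ)..2, ((∫ x, |f x| ^ s ∂μ) ^ (1 / s)) ^ 2 ≤ 55 * (a + ε) ^ 2 := by
    intro ε hε
    have hlt : orliczNorm μ Phi f < orliczNorm μ Phi f + ENNReal.ofReal ε :=
      ENNReal.lt_add_right hfin.ne (by simpa using hε)
    rw [orliczNorm] at hlt
    obtain ⟨b, hbS, hblt⟩ := sInf_lt_iff.mp (lt_of_le_of_lt le_rfl hlt)
    obtain ⟨r, hr, rfl, hint⟩ := hbS
    have hrle : r ≤ a + ε := by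
      have h1 : ENNReal.ofReal r ≤ orliczNorm μ Phi f + ENNReal.ofReal ε := hblt.le
      have h2 := ENNReal.toReal_mono
        (by exact ENNReal.add_ne_top.mpr ⟨hfin.ne, ENNReal.ofReal_ne_top⟩) h1
      rwa [ENNReal.toReal_ofReal hr.le, ENNReal.toReal_add hfin.ne ENNReal.ofReal_ne_top,
        ENNReal.toReal_ofReal hε.le] at h2
    have hmain := mainLem μ (fun x => f x / r) (hf.div_const r) hint
    -- scaling
    have hscale : ∀ s ∈ Set.uIcc (1:ℝ) 2,
        ((∫ x, |f x| ^ s ∂μ) ^ (1 / s)) ^ 2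
          = r ^ 2 * ((∫ x, |f x / r| ^ s ∂μ) ^ (1 / s)) ^ 2 := by
      intro s hs
      rw [Set.uIcc_of_le (by norm_num : (1:ℝ) ≤ 2)] at hs
      have hs0 : 0 < s := by linarith [hs.1]
      have h1 : ∀ x : Ω, |f x| ^ s = r ^ s * |f x / r| ^ s := by
        intro x
        rw [abs_div, abs_of_pos hr, ← Real.mul_rpow hr.le (by positivity)]
        rw [mul_div_cancel₀ _ hr.ne']
      simp only [h1]
      rw [integral_const_mul]
      have hQ : 0 ≤ ∫ x, |f x / r| ^ s ∂μ :=
        integral_nonneg fun x => Real.rpow_nonneg (abs_nonneg _) s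
      rw [Real.mul_rpow (Real.rpow_nonneg hr.le s) hQ]
      rw [← Real.rpow_mul hr.le, mul_one_div_cancel hs0.ne', Real.rpow_one, mul_pow]
    calc ∫ s in (1:ℝ)..2, ((∫ x, |f x| ^ s ∂μ) ^ (1 / s)) ^ 2
        = ∫ s in (1:ℝ)..2, r ^ 2 * ((∫ x, |f x / r| ^ s ∂μ) ^ (1 / s)) ^ 2 :=
          intervalIntegral.integral_congr hscale
      _ = r ^ 2 * ∫ s in (1:ℝ)..2, ((∫ x, |f x / r| ^ s ∂μ) ^ (1 / s)) ^ 2 :=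
          intervalIntegral.integral_const_mul _ _
      _ ≤ r ^ 2 * 55 := mul_le_mul_of_nonneg_left hmain (by positivity)
      _ ≤ 55 * (a + ε) ^ 2 := by nlinarith
  apply le_of_forall_pos_le_add
  intro δ hδ
  have hd : (0:ℝ) < 55 * (2 * a + 1) := by nlinarith
  set ε := min 1 (δ / (55 * (2 * a + 1))) with hεdef
  have hε : 0 < ε := lt_min one_pos (by positivity)
  have hε1 : ε ≤ 1 := min_le_left _ _
  have hε2 : 55 * (2 * a + 1) * ε ≤ δ := by
    have := min_le_right (1:ℝ) (δ / (55 * (2 * a + 1)))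
    rw [← hεdef] at this
    calc 55 * (2 * a + 1) * ε ≤ 55 * (2 * a + 1) * (δ / (55 * (2 * a + 1))) := by
          apply mul_le_mul_of_nonneg_left this hd.le
      _ = δ := by field_simp
  have hk := key ε hε
  nlinarith
end

section
/- For every natural number n ≥ 0, ∫_{r=1}^{2} exp((2/r)·((n:ℝ)−1)·(r−2)) · (n+1)^{2/r} dr ≤ 2e⁴. -/
open MeasureTheory Real

/-- For every `n : ℕ`, `∫₁² exp((2/r)(n−1)(r−2)) (n+1)^(2/r) dr ≤ 2e⁴`. -/
theorem stmt2 (n : ℕ) :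
    ∫ r in (1:ℝ)..2, Real.exp ((2 / r) * ((n : ℝ) - 1) * (r - 2)) * ((n : ℝ) + 1) ^ (2 / r)
      ≤ 2 * Real.exp 4 := by
  have hpos : (0:ℝ) < (n:ℝ) + 1 := by positivity
  set L : ℝ := Real.log ((n:ℝ) + 1) with hLdef
  have hL0 : 0 ≤ L := Real.log_nonneg (by linarith)
  -- rewrite integrand as exp of a single expression
  have hrw : ∀ r : ℝ, Real.exp ((2 / r) * ((n : ℝ) - 1) * (r - 2)) * ((n : ℝ) + 1) ^ (2 / r)
      = Real.exp ((2 / r) * ((n : ℝ) - 1) * (r - 2) + L * (2 / r)) := by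
    intro r
    rw [Real.rpow_def_of_pos hpos, ← Real.exp_add]
  have hcont : ContinuousOn (fun r : ℝ =>
      Real.exp ((2 / r) * ((n : ℝ) - 1) * (r - 2) + L * (2 / r))) (Set.uIcc 1 2) := by
    apply Real.continuous_exp.comp_continuousOn
    apply ContinuousOn.add
    · apply ContinuousOn.mul
      · apply ContinuousOn.mul
        · apply ContinuousOn.div continuousOn_const continuousOn_id
          intro x hx
          rw [Set.uIcc_of_le (by norm_num : (1:ℝ) ≤ 2)] at hx
          exact ne_of_gt (lt_of_lt_of_le one_pos hx.1)
        · exact continuousOn_const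
      · fun_prop
    · apply ContinuousOn.mul continuousOn_const
      apply ContinuousOn.div continuousOn_const continuousOn_id
      intro x hx
      rw [Set.uIcc_of_le (by norm_num : (1:ℝ) ≤ 2)] at hx
      exact ne_of_gt (lt_of_lt_of_le one_pos hx.1)
  have hint : IntervalIntegrable (fun r : ℝ =>
      Real.exp ((2 / r) * ((n : ℝ) - 1) * (r - 2) + L * (2 / r))) volume 1 2 :=
    hcont.intervalIntegrable
  simp only [hrw]
  have he4 : (5:ℝ) ≤ Real.exp 4 := by
    have := Real.add_one_le_exp (4:ℝ); linarith
  rcases le_or_gt ((n:ℝ)) 4 with hn | hn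
  · -- small n: pointwise bound by 25
    have hbound : ∀ r ∈ Set.Icc (1:ℝ) 2,
        Real.exp ((2 / r) * ((n : ℝ) - 1) * (r - 2) + L * (2 / r)) ≤ 25 := by
      intro r hr
      obtain ⟨hr1, hr2⟩ := hr
      have hr0 : (0:ℝ) < r := by linarith
      have hd1 : 1 ≤ 2 / r := (one_le_div hr0).2 hr2
      have hd2 : 2 / r ≤ 2 := by rw [div_le_iff₀ hr0]; nlinarith
      have hL4 : L ≤ Real.log 5 := by
        apply Real.log_le_log (by positivity); linarith
      have hlog5 : Real.log 5 ≤ Real.log 25 / 2 := by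
        rw [show (25:ℝ) = 5 ^ (2:ℕ) by norm_num, Real.log_pow]
        push_cast; linarith
      have hexp : (2 / r) * ((n : ℝ) - 1) * (r - 2) + L * (2 / r) ≤ Real.log 25 := by
        rcases Nat.eq_zero_or_pos n with h0 | h1
        · subst h0
          simp only [Nat.cast_zero] at *
          have hLz : L = 0 := by simp [hLdef]
          rw [hLz]
          have h25 : (2:ℝ) ≤ Real.log 25 := by
            rw [show (25:ℝ) = 5 ^ (2:ℕ) by norm_num, Real.log_pow]
            have : (1:ℝ) ≤ Real.log 5 := by
              rw [Real.le_log_iff_exp_le (by norm_num)]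
              calc Real.exp 1 ≤ 2.7182818286 := Real.exp_one_lt_d9.le
                _ ≤ 5 := by norm_num
            push_cast; linarith
          nlinarith
        · have hn1 : (1:ℝ) ≤ (n:ℝ) := by exact_mod_cast h1
          have h1' : (2 / r) * ((n : ℝ) - 1) * (r - 2) ≤ 0 := by
            apply mul_nonpos_of_nonneg_of_nonpos
            · exact mul_nonneg (div_nonneg (by norm_num) hr0.le) (by linarith)
            · linarith
          have h2' : L * (2 / r) ≤ Real.log 25 := by
            calc L * (2 / r) ≤ (Real.log 25 / 2) * 2 := by
                  apply mul_le_mul (le_trans hL4 hlog5) hd2 (div_nonneg (by norm_num) hr0.le)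
                  have : (0:ℝ) ≤ Real.log 5 := Real.log_nonneg (by norm_num)
                  linarith
              _ = Real.log 25 := by ring
          linarith
      calc Real.exp _ ≤ Real.exp (Real.log 25) := Real.exp_le_exp.2 hexp
        _ = 25 := Real.exp_log (by norm_num)
    calc ∫ r in (1:ℝ)..2, Real.exp ((2 / r) * ((n : ℝ) - 1) * (r - 2) + L * (2 / r))
        ≤ ∫ _ in (1:ℝ)..2, (25:ℝ) :=
          intervalIntegral.integral_mono_on (by norm_num) hint intervalIntegrable_const hbound
      _ = 25 := by norm_num
      _ ≤ 2 * Real.exp 4 := by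
          have h2 : (2:ℝ) < Real.exp 1 := by
            have := Real.exp_one_gt_d9; linarith
          have h4 : Real.exp 4 = Real.exp 1 ^ (4:ℕ) := by
            rw [← Real.exp_nat_mul]; norm_num
          have : (2:ℝ) ^ (4:ℕ) ≤ Real.exp 1 ^ (4:ℕ) :=
            pow_le_pow_left₀ (by norm_num) h2.le 4
          rw [h4]; norm_num at this ⊢; linarith
  · -- large n
    have hn5 : (5:ℝ) ≤ (n:ℝ) := by
      have : (4:ℕ) < n := by exact_mod_cast hn
      exact_mod_cast this
    have hLhalf : L ≤ ((n:ℝ) + 1) / 2 := by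
      have hs : Real.sqrt ((n:ℝ)+1) ^ 2 = (n:ℝ)+1 := Real.sq_sqrt hpos.le
      have h1 : Real.log (Real.sqrt ((n:ℝ)+1)) = L / 2 := by
        rw [Real.log_sqrt hpos.le]
      have h2 : Real.log (Real.sqrt ((n:ℝ)+1)) ≤ Real.sqrt ((n:ℝ)+1) - 1 :=
        Real.log_le_sub_one_of_pos (Real.sqrt_pos.2 hpos)
      nlinarith [sq_nonneg (Real.sqrt ((n:ℝ)+1) - 2)]
    set c : ℝ := (n:ℝ) - 1 - L with hcdef
    have hc1 : 1 ≤ c := by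
      have : ((n:ℝ) - 3) / 2 ≤ c := by rw [hcdef]; linarith
      linarith
    have hc0 : (0:ℝ) < c := by linarith
    -- pointwise bound
    have hbound : ∀ r ∈ Set.Icc (1:ℝ) 2,
        Real.exp ((2 / r) * ((n : ℝ) - 1) * (r - 2) + L * (2 / r))
          ≤ ((n:ℝ) + 1) * Real.exp (c * (r - 2)) := by
      intro r hr
      obtain ⟨hr1, hr2⟩ := hr
      have hr0 : (0:ℝ) < r := by linarith
      have hd1 : 1 ≤ 2 / r := (one_le_div hr0).2 hr2
      have hd2 : 2 / r ≤ 3 - r := by rw [div_le_iff₀ hr0]; nlinarith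
      have hn1 : (1:ℝ) ≤ (n:ℝ) := by linarith
      have e1 : (2 / r) * (((n:ℝ) - 1) * (r - 2)) ≤ 1 * (((n:ℝ) - 1) * (r - 2)) := by
        apply mul_le_mul_of_nonpos_right hd1
        apply mul_nonpos_of_nonneg_of_nonpos (by linarith) (by linarith)
      have e2 : L * (2 / r) ≤ L * (3 - r) := mul_le_mul_of_nonneg_left hd2 hL0
      have : ((n:ℝ) + 1) * Real.exp (c * (r - 2)) = Real.exp (L + c * (r - 2)) := by
        rw [Real.exp_add, Real.exp_log hpos]
      rw [this]
      apply Real.exp_le_exp.2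
      have hident : L + c * (r - 2) = ((n:ℝ) - 1) * (r - 2) + L * (3 - r) := by
        rw [hcdef]; ring
      rw [hident]
      have : (2 / r) * ((n : ℝ) - 1) * (r - 2) = (2 / r) * (((n:ℝ) - 1) * (r - 2)) := by ring
      rw [this]
      linarith
    have hgint : IntervalIntegrable (fun r : ℝ => ((n:ℝ) + 1) * Real.exp (c * (r - 2)))
        volume 1 2 :=
      Continuous.intervalIntegrable
        (continuous_const.mul (Real.continuous_exp.comp (by fun_prop))) 1 2
    have hval : ∫ r in (1:ℝ)..2, ((n:ℝ) + 1) * Real.exp (c * (r - 2))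
        = ((n:ℝ) + 1) * Real.exp (c * (2 - 2)) / c - ((n:ℝ) + 1) * Real.exp (c * (1 - 2)) / c := by
      apply intervalIntegral.integral_eq_sub_of_hasDerivAt
        (f := fun x => ((n:ℝ) + 1) * Real.exp (c * (x - 2)) / c)
      · intro x _
        have h1 : HasDerivAt (fun x : ℝ => c * (x - 2)) c x := by
          simpa using ((hasDerivAt_id x).sub_const 2).const_mul c
        have h2 : HasDerivAt (fun x : ℝ => Real.exp (c * (x - 2)))
            (Real.exp (c * (x - 2)) * c) x := (Real.hasDerivAt_exp _).comp x h1
        have h3 := (h2.const_mul ((n:ℝ) + 1)).div_const c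
        rw [mul_div_assoc, mul_div_cancel_right₀ _ hc0.ne'] at h3
        exact h3
      · exact hgint
    calc ∫ r in (1:ℝ)..2, Real.exp ((2 / r) * ((n : ℝ) - 1) * (r - 2) + L * (2 / r))
        ≤ ∫ r in (1:ℝ)..2, ((n:ℝ) + 1) * Real.exp (c * (r - 2)) :=
          intervalIntegral.integral_mono_on (by norm_num) hint hgint hbound
      _ = ((n:ℝ) + 1) * Real.exp (c * (2 - 2)) / c - ((n:ℝ) + 1) * Real.exp (c * (1 - 2)) / c := hval
      _ ≤ ((n:ℝ) + 1) / c := by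
          have : (0:ℝ) < Real.exp (c * (1 - 2)) := Real.exp_pos _
          have h0 : Real.exp (c * (2 - 2)) = 1 := by norm_num
          rw [h0, mul_one]
          have hp : 0 ≤ ((n:ℝ) + 1) * Real.exp (c * (1 - 2)) / c := by positivity
          linarith
      _ ≤ 2 * Real.exp 4 := by
          rw [div_le_iff₀ hc0]
          have hcge : ((n:ℝ) - 3) / 2 ≤ c := by rw [hcdef]; linarith
          have hmul : 5 * (((n:ℝ) - 3) / 2) ≤ Real.exp 4 * c :=
            mul_le_mul he4 hcge (by linarith) (Real.exp_pos 4).le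
          nlinarith
end

section
/- For every real number x ≥ 1, ∫_{u=1}^{2} exp(2x(1−u)) · x^u du ≤ 1. -/
open MeasureTheory Real

/-- For every real `x ≥ 1`, `∫₁² exp(2x(1−u)) x^u du ≤ 1`. -/
theorem stmt3 (x : ℝ) (hx : 1 ≤ x) :
    ∫ u in (1:ℝ)..2, Real.exp (2 * x * (1 - u)) * x ^ u ≤ 1 := by
  have hx0 : (0:ℝ) < x := lt_of_lt_of_le one_pos hx
  have hxlog : Real.log x ≤ x := (Real.log_le_sub_one_of_pos hx0).trans (by linarith)
  have hrpow : ∀ u : ℝ, x ^ u = Real.exp (Real.log x * u) := fun u => by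
    rw [Real.rpow_def_of_pos hx0]
  -- continuity of the integrand
  have hcont : Continuous fun u : ℝ => Real.exp (2 * x * (1 - u)) * x ^ u := by
    simp only [hrpow]
    exact (Real.continuous_exp.comp (by continuity)).mul
      (Real.continuous_exp.comp (by continuity))
  have hcont2 : Continuous fun u : ℝ => x * Real.exp (x * (1 - u)) :=
    continuous_const.mul (Real.continuous_exp.comp (by continuity))
  -- pointwise bound on [1,2]
  have hmono : ∫ u in (1:ℝ)..2, Real.exp (2 * x * (1 - u)) * x ^ u
      ≤ ∫ u in (1:ℝ)..2, x * Real.exp (x * (1 - u)) := by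
    apply intervalIntegral.integral_mono_on (by norm_num)
      (hcont.intervalIntegrable _ _) (hcont2.intervalIntegrable _ _)
    intro u hu
    rw [hrpow, ← Real.exp_add]
    have hx' : x = Real.exp (Real.log x) := (Real.exp_log hx0).symm
    calc Real.exp (2 * x * (1 - u) + Real.log x * u)
        ≤ Real.exp (Real.log x + x * (1 - u)) := by
          apply Real.exp_le_exp.2
          have h1 : 1 ≤ u := hu.1
          nlinarith [hu.1, hxlog]
      _ = x * Real.exp (x * (1 - u)) := by
          rw [Real.exp_add, Real.exp_log hx0]
  -- compute the second integral via antiderivative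
  have hderiv : ∀ u ∈ Set.uIcc (1:ℝ) 2,
      HasDerivAt (fun u : ℝ => -Real.exp (x * (1 - u)))
        (x * Real.exp (x * (1 - u))) u := by
    intro u _
    have h1 : HasDerivAt (fun u : ℝ => x * (1 - u)) (-x) u := by
      simpa using ((hasDerivAt_id u).const_sub 1).const_mul x
    have h2 := (Real.hasDerivAt_exp (x * (1 - u))).comp u h1
    have := h2.neg
    refine this.congr_deriv ?_
    ring
  have hint : ∫ u in (1:ℝ)..2, x * Real.exp (x * (1 - u))
      = 1 - Real.exp (-x) := by
    rw [intervalIntegral.integral_eq_sub_of_hasDerivAt hderiv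
      (hcont2.intervalIntegrable _ _)]
    norm_num
    ring
  calc ∫ u in (1:ℝ)..2, Real.exp (2 * x * (1 - u)) * x ^ u
      ≤ 1 - Real.exp (-x) := hmono.trans_eq hint
    _ ≤ 1 := by have := Real.exp_pos (-x); linarith
end

section
/- Let E be a finite nonempty type, 𝒢 a countable set, Ω = (𝒢 → E), and μ a probability measure on Ω. For each x ∈ 𝒢 and η ∈ Ω let μ_{x,η} be a probability measure on E, measurable in η, and let κ_x be the Markov kernel from Ω to Ω sending η to the law of a ↦ (η updated at x to the value a) with a distributed according to μ_{x,η}. Assume μ is invariant under each κ_x and assume α := inf{μ_{x,η}({e}) : x ∈ 𝒢, η ∈ Ω, e ∈ E} > 0. Then for every f ∈ L²(μ) and every x ∈ 𝒢: ∫ (∫ (f(η updated at x to a) − f(η))² μ_{x,η}(da)) μ(dη) ≤ α^{-3} ∫ (∫ (f(η updated at x to a) − f(η)) μ_{x,η}(da))² μ(dη). Consequently the Dirichlet form ℰ(f,f) = (1/2) Σ_{x∈𝒢} ∫ (∫ (f(ξ)−f(η))² κ_x(η)(dξ)) μ(dη) satisfies ℰ(f,f) ≤ α^{-3} Σ_{x∈𝒢}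 ∫ (D_x f)² dμ, where D_x f(η) = ∫ f dκ_x(η) − f(η). -/
open MeasureTheory Real
open scoped ENNReal

section Aux

variable {E : Type*} [Fintype E] [Nonempty E] [MeasurableSpace E] [MeasurableSingletonClass E]

omit [Nonempty E] in
lemma meas_sum (m : Measure E) (T : Set E) :
    m T = ∑ a : E, T.indicator (fun b => m {b}) a := by
  have h1 : m T = ∫⁻ a, T.indicator (fun _ => (1 : ℝ≥0∞)) a ∂m := by
    rw [lintegral_indicator_const T.toFinite.measurableSet, one_mul]
  rw [h1, lintegral_fintype]
  refine Finset.sum_congr rfl fun a _ => ?_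
  by_cases ha : a ∈ T <;> simp [Set.indicator_of_mem, Set.indicator_of_notMem, ha]

omit [Nonempty E] in
lemma sum_le_inv_integral (α : ℝ) (hα : 0 < α) (m : Measure E) [IsProbabilityMeasure m]
    (hb : ∀ e : E, α ≤ (m {e}).toReal) (h : E → ℝ) (hpos : ∀ a, 0 ≤ h a) :
    ∑ a, h a ≤ α⁻¹ * ∫ a, h a ∂m := by
  have hint : ∫ a, h a ∂m = ∑ a, (m {a}).toReal • h a := integral_fintype (.of_finite)
  have : α * ∑ a, h a ≤ ∫ a, h a ∂m := by
    rw [hint, Finset.mul_sum]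
    refine Finset.sum_le_sum fun a _ => ?_
    simp only [smul_eq_mul]
    exact mul_le_mul_of_nonneg_right (hb a) (hpos a)
  calc ∑ a, h a = α⁻¹ * (α * ∑ a, h a) := by field_simp
  _ ≤ α⁻¹ * ∫ a, h a ∂m := by
    exact mul_le_mul_of_nonneg_left this (inv_nonneg.2 hα.le)

lemma key_pointwise (α : ℝ) (hα : 0 < α) (ν' : E → Measure E)
    (hprob : ∀ a, IsProbabilityMeasure (ν' a))
    (hb : ∀ a e, α ≤ ((ν' a) {e}).toReal) (g : E → ℝ) (b : E) :
    ∫ a, (g a - g b) ^ 2 ∂(ν' b) ≤ α⁻¹ ^ 2 * ∑ a, ((∫ c, g c ∂(ν' a)) - g a) ^ 2 := by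
  haveI := hprob
  obtain ⟨aM, haM⟩ := Finite.exists_max g
  obtain ⟨am, ham⟩ := Finite.exists_min g
  set osc : ℝ := g aM - g am with hosc
  have hosc0 : 0 ≤ osc := sub_nonneg.2 (ham aM)
  have h1 : ∫ a, (g a - g b) ^ 2 ∂(ν' b) ≤ osc ^ 2 := by
    have : ∀ a, (g a - g b) ^ 2 ≤ osc ^ 2 := by
      intro a
      refine sq_le_sq' ?_ ?_
      · have := haM b; have := ham a; linarith
      · have := haM a; have := ham b; linarith
    calc ∫ a, (g a - g b) ^ 2 ∂(ν' b) ≤ ∫ _, osc ^ 2 ∂(ν' b) :=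
          integral_mono (.of_finite) (integrable_const _) this
      _ = osc ^ 2 := by simp
  have h2 : α * osc ≤ g aM - ∫ c, g c ∂(ν' aM) := by
    have he : g aM - ∫ c, g c ∂(ν' aM) = ∫ c, (g aM - g c) ∂(ν' aM) := by
      rw [integral_sub (integrable_const _) (.of_finite), integral_const]
      simp
    rw [he, integral_fintype (.of_finite)]
    calc α * osc ≤ ((ν' aM) {am}).toReal • (g aM - g am) := by
          simp only [smul_eq_mul]
          exact mul_le_mul_of_nonneg_right (hb aM am) hosc0
      _ ≤ ∑ c, ((ν' aM) {c}).toReal • (g aM - g c) := by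
          refine Finset.single_le_sum (f := fun c => ((ν' aM) {c}).toReal • (g aM - g c))
            (fun c _ => smul_nonneg ENNReal.toReal_nonneg (sub_nonneg.2 (haM c)))
            (Finset.mem_univ am)
  have h3 : osc ^ 2 ≤ α⁻¹ ^ 2 * ((∫ c, g c ∂(ν' aM)) - g aM) ^ 2 := by
    have hd : α * osc ≤ -((∫ c, g c ∂(ν' aM)) - g aM) := by linarith
    have hsq : (α * osc) ^ 2 ≤ ((∫ c, g c ∂(ν' aM)) - g aM) ^ 2 := by
      rw [← neg_sq ((∫ c, g c ∂(ν' aM)) - g aM)]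
      refine sq_le_sq' ?_ hd
      have h0 : 0 ≤ α * osc := mul_nonneg hα.le hosc0
      linarith
    calc osc ^ 2 = α⁻¹ ^ 2 * (α * osc) ^ 2 := by
          field_simp
      _ ≤ α⁻¹ ^ 2 * ((∫ c, g c ∂(ν' aM)) - g aM) ^ 2 := by
          exact mul_le_mul_of_nonneg_left hsq (by positivity)
  refine h1.trans (h3.trans ?_)
  refine mul_le_mul_of_nonneg_left ?_ (by positivity)
  exact Finset.single_le_sum (f := fun a => ((∫ c, g c ∂(ν' a)) - g a) ^ 2)
    (fun a _ => sq_nonneg _) (Finset.mem_univ aM)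

end Aux

section Main

variable {E G : Type*} [Fintype E] [Nonempty E] [MeasurableSpace E]
    [MeasurableSingletonClass E] [Countable G] [DecidableEq G]
    {μ : Measure (G → E)} [IsProbabilityMeasure μ]
    {ν : G → (G → E) → Measure E}

lemma kappa_meas (hνmeas : ∀ x : G, Measurable (ν x)) (x : G) :
    Measurable (fun η => (ν x η).map (fun a => Function.update η x a)) := by
  apply Measure.measurable_of_measurable_coe
  intro S hS
  have key : ∀ η : G → E, ((ν x η).map (fun a => Function.update η x a)) S
      = ∑ a : E, ((fun η' => Function.update η' x a) ⁻¹' S).indicator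
          (fun η' => ν x η' {a}) η := by
    intro η
    rw [Measure.map_apply (measurable_of_countable _) hS, meas_sum]
    refine Finset.sum_congr rfl fun a _ => ?_
    by_cases ha : Function.update η x a ∈ S
    · rw [Set.indicator_of_mem (by exact ha), Set.indicator_of_mem (by exact ha)]
    · rw [Set.indicator_of_notMem (by exact ha), Set.indicator_of_notMem (by exact ha)]
  simp only [key]
  exact Finset.measurable_sum _ fun a _ =>
    (((Measure.measurable_coe (measurableSet_singleton a)).comp (hνmeas x))).indicator
      (measurable_update_left hS)

lemma inv_lintegral (hνmeas : ∀ x : G, Measurable (ν x))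
    (hinv : ∀ x : G,
      μ.bind (fun η => (ν x η).map (fun a => Function.update η x a)) = μ)
    (x : G) (φ : (G → E) → ℝ≥0∞) (hφ : Measurable φ) :
    ∫⁻ η, φ η ∂μ = ∫⁻ η, ∫⁻ a, φ (Function.update η x a) ∂(ν x η) ∂μ := by
  conv_lhs => rw [← hinv x]
  rw [Measure.lintegral_bind (kappa_meas hνmeas x).aemeasurable hφ.aemeasurable]
  exact lintegral_congr fun η => lintegral_map hφ (measurable_of_countable _)

lemma map_le (hνmeas : ∀ x : G, Measurable (ν x))
    (hinv : ∀ x : G,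
      μ.bind (fun η => (ν x η).map (fun a => Function.update η x a)) = μ)
    (α : ℝ) (hα : 0 < α)
    (hαle : ∀ (x : G) (η : G → E) (e : E), α ≤ ((ν x η) {e}).toReal)
    (x : G) (a : E) :
    μ.map (fun η => Function.update η x a) ≤ (ENNReal.ofReal α)⁻¹ • μ := by
  have hbase : ∀ S : Set (G → E), MeasurableSet S →
      ENNReal.ofReal α * μ ((fun η => Function.update η x a) ⁻¹' S) ≤ μ S := by
    intro S hS
    conv_rhs => rw [← hinv x]
    rw [Measure.bind_apply hS (kappa_meas hνmeas x).aemeasurable]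
    have hpt : ∀ η, ((fun η' => Function.update η' x a) ⁻¹' S).indicator
        (fun _ => ENNReal.ofReal α) η ≤ ((ν x η).map (fun b => Function.update η x b)) S := by
      intro η
      by_cases hη : Function.update η x a ∈ S
      · rw [Set.indicator_of_mem (by exact hη)]
        rw [Measure.map_apply (measurable_of_countable _) hS]
        calc ENNReal.ofReal α ≤ ν x η {a} := ENNReal.ofReal_le_of_le_toReal (hαle x η a)
          _ ≤ ν x η ((fun b => Function.update η x b) ⁻¹' S) :=
            measure_mono (Set.singleton_subset_iff.2 hη)
      · rw [Set.indicator_of_notMem (by exact hη)]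
        positivity
    calc ENNReal.ofReal α * μ ((fun η => Function.update η x a) ⁻¹' S)
        = ∫⁻ η, ((fun η' => Function.update η' x a) ⁻¹' S).indicator
            (fun _ => ENNReal.ofReal α) η ∂μ := by
          rw [lintegral_indicator_const (measurable_update_left hS)]
      _ ≤ ∫⁻ η, ((ν x η).map (fun b => Function.update η x b)) S ∂μ := lintegral_mono hpt
  refine Measure.le_iff.2 fun S hS => ?_
  rw [Measure.map_apply measurable_update_left hS, Measure.smul_apply, smul_eq_mul]
  calc μ ((fun η => Function.update η x a) ⁻¹' S)
      = (ENNReal.ofReal α)⁻¹ * (ENNReal.ofReal α *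
          μ ((fun η => Function.update η x a) ⁻¹' S)) := by
        rw [← mul_assoc, ENNReal.inv_mul_cancel (ENNReal.ofReal_pos.2 hα).ne'
          ENNReal.ofReal_ne_top, one_mul]
    _ ≤ (ENNReal.ofReal α)⁻¹ * μ S := mul_le_mul_right (hbase S hS) _

lemma comp_memLp (hνmeas : ∀ x : G, Measurable (ν x))
    (hinv : ∀ x : G,
      μ.bind (fun η => (ν x η).map (fun a => Function.update η x a)) = μ)
    (α : ℝ) (hα : 0 < α)
    (hαle : ∀ (x : G) (η : G → E) (e : E), α ≤ ((ν x η) {e}).toReal)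
    {f : (G → E) → ℝ} (hfmeas : Measurable f) (hf : MemLp f 2 μ) (x : G) (a : E) :
    MemLp (fun η => f (Function.update η x a)) 2 μ := by
  have h1 : MemLp f 2 ((ENNReal.ofReal α)⁻¹ • μ) :=
    hf.smul_measure (ENNReal.inv_ne_top.2 (ENNReal.ofReal_pos.2 hα).ne')
  have h2 : MemLp f 2 (μ.map (fun η => Function.update η x a)) :=
    h1.mono_measure (map_le hνmeas hinv α hα hαle x a)
  exact (memLp_map_measure_iff hfmeas.aestronglyMeasurable
    measurable_update_left.aemeasurable).1 h2

end Main

section Main2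

variable {E G : Type*} [Fintype E] [Nonempty E] [MeasurableSpace E]
    [MeasurableSingletonClass E] [Countable G] [DecidableEq G]
    {μ : Measure (G → E)} [IsProbabilityMeasure μ]
    {ν : G → (G → E) → Measure E}

lemma aux_x (hνprob : ∀ x η, IsProbabilityMeasure (ν x η))
    (hνmeas : ∀ x : G, Measurable (ν x))
    (hinv : ∀ x : G,
      μ.bind (fun η => (ν x η).map (fun a => Function.update η x a)) = μ)
    (α : ℝ) (hα : 0 < α)
    (hαle : ∀ (x : G) (η : G → E) (e : E), α ≤ ((ν x η) {e}).toReal)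
    {f : (G → E) → ℝ} (hfmeas : Measurable f) (hf : MemLp f 2 μ) (x : G) :
    Integrable (fun η => (∫ a, (f (Function.update η x a) - f η) ∂(ν x η)) ^ 2) μ ∧
    Measurable (fun η => ∫ a, (f (Function.update η x a) - f η) ^ 2 ∂(ν x η)) ∧
    Measurable (fun η => (∫ a, (f (Function.update η x a) - f η) ∂(ν x η)) ^ 2) ∧
    (∀ η, 0 ≤ ∫ a, (f (Function.update η x a) - f η) ^ 2 ∂(ν x η)) ∧
    ∫⁻ η, ENNReal.ofReal (∫ a, (f (Function.update η x a) - f η) ^ 2 ∂(ν x η)) ∂μ ≤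
      ENNReal.ofReal (α⁻¹ ^ 3) *
        ∫⁻ η, ENNReal.ofReal ((∫ a, (f (Function.update η x a) - f η) ∂(ν x η)) ^ 2) ∂μ := by
  haveI : ∀ x η, IsProbabilityMeasure (ν x η) := hνprob
  have hw : ∀ a : E, Measurable (fun η => ((ν x η) {a}).toReal) := fun a =>
    ((Measure.measurable_coe (measurableSet_singleton a)).comp (hνmeas x)).ennreal_toReal
  have hfu : ∀ a : E, Measurable (fun η => f (Function.update η x a)) := fun a =>
    hfmeas.comp measurable_update_left
  have hT_eq : ∀ η : G → E, (∫ a, f (Function.update η x a) ∂(ν x η))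
      = ∑ a : E, ((ν x η) {a}).toReal * f (Function.update η x a) := by
    intro η
    rw [integral_fintype (.of_finite)]
    simp [smul_eq_mul, Measure.real]
  have hTmeas : Measurable (fun η => ∫ a, f (Function.update η x a) ∂(ν x η)) := by
    simp only [hT_eq]
    exact Finset.measurable_sum _ fun a _ => (hw a).mul (hfu a)
  have hTmem : MemLp (fun η => ∫ a, f (Function.update η x a) ∂(ν x η)) 2 μ := by
    have heq : (fun η => ∫ a, f (Function.update η x a) ∂(ν x η))
        = fun η => ∑ a : E, ((ν x η) {a}).toReal * f (Function.update η x a) := funext hT_eq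
    rw [heq]
    refine memLp_finset_sum _ fun a _ => ?_
    refine MemLp.of_le (comp_memLp hνmeas hinv α hα hαle hfmeas hf x a)
      (((hw a).mul (hfu a)).aestronglyMeasurable) ?_
    refine Filter.Eventually.of_forall fun η => ?_
    simp only [Real.norm_eq_abs, abs_mul]
    have h1 : |((ν x η) {a}).toReal| ≤ 1 := by
      rw [abs_of_nonneg ENNReal.toReal_nonneg]
      have := prob_le_one (μ := ν x η) (s := {a})
      calc ((ν x η) {a}).toReal ≤ (1 : ℝ≥0∞).toReal := ENNReal.toReal_mono ENNReal.one_ne_top this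
        _ = 1 := by simp
    calc |((ν x η) {a}).toReal| * |f (Function.update η x a)|
        ≤ 1 * |f (Function.update η x a)| := mul_le_mul_of_nonneg_right h1 (abs_nonneg _)
      _ = |f (Function.update η x a)| := one_mul _
  have hD_eq : ∀ η : G → E, (∫ a, (f (Function.update η x a) - f η) ∂(ν x η))
      = (∫ a, f (Function.update η x a) ∂(ν x η)) - f η := by
    intro η
    rw [integral_sub (.of_finite) (integrable_const _), integral_const]
    simp
  have hDfun : (fun η => ∫ a, (f (Function.update η x a) - f η) ∂(ν x η))
      = fun η => (∫ a, f (Function.update η x a) ∂(ν x η)) - f η := funext hD_eq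
  have hDmeas : Measurable (fun η => ∫ a, (f (Function.update η x a) - f η) ∂(ν x η)) := by
    rw [hDfun]; exact hTmeas.sub hfmeas
  have hDmem : MemLp (fun η => ∫ a, (f (Function.update η x a) - f η) ∂(ν x η)) 2 μ := by
    rw [hDfun]; exact hTmem.sub hf
  have hDsq_int : Integrable
      (fun η => (∫ a, (f (Function.update η x a) - f η) ∂(ν x η)) ^ 2) μ :=
    hDmem.integrable_sq
  have hV_eq : ∀ η : G → E, (∫ a, (f (Function.update η x a) - f η) ^ 2 ∂(ν x η))
      = ∑ a : E, ((ν x η) {a}).toReal * (f (Function.update η x a) - f η) ^ 2 := by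
    intro η; rw [integral_fintype (.of_finite)]; simp [smul_eq_mul, Measure.real]
  have hVmeas : Measurable (fun η => ∫ a, (f (Function.update η x a) - f η) ^ 2 ∂(ν x η)) := by
    simp only [hV_eq]
    exact Finset.measurable_sum _ fun a _ => (hw a).mul (((hfu a).sub hfmeas).pow_const 2)
  have hVnonneg : ∀ η, 0 ≤ ∫ a, (f (Function.update η x a) - f η) ^ 2 ∂(ν x η) := fun η =>
    integral_nonneg fun a => sq_nonneg _
  -- pointwise inequality
  have hpt : ∀ η : G → E, (∫ a, (f (Function.update η x a) - f η) ^ 2 ∂(ν x η)) ≤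
      α⁻¹ ^ 3 * ∫ a, (∫ c, (f (Function.update (Function.update η x a) x c)
        - f (Function.update η x a)) ∂(ν x (Function.update η x a))) ^ 2 ∂(ν x η) := by
    intro η
    have h1 := key_pointwise α hα (fun a => ν x (Function.update η x a))
      (fun a => hνprob _ _) (fun a e => hαle _ _ _)
      (fun a => f (Function.update η x a)) (η x)
    simp only [Function.update_eq_self] at h1
    have hDu : ∀ a : E, (∫ c, (f (Function.update (Function.update η x a) x c)
        - f (Function.update η x a)) ∂(ν x (Function.update η x a)))
        = (∫ c, f (Function.update η x c) ∂(ν x (Function.update η x a)))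
            - f (Function.update η x a) := by
      intro a
      rw [hD_eq (Function.update η x a)]
      simp only [Function.update_idem]
    have h2 := sum_le_inv_integral α hα (ν x η) (hαle x η)
      (fun a => (∫ c, (f (Function.update (Function.update η x a) x c)
        - f (Function.update η x a)) ∂(ν x (Function.update η x a))) ^ 2)
      (fun a => sq_nonneg _)
    simp only [hDu] at h2 ⊢
    refine h1.trans ?_
    calc α⁻¹ ^ 2 * ∑ a : E, ((∫ c, f (Function.update η x c) ∂(ν x (Function.update η x a)))
          - f (Function.update η x a)) ^ 2
        ≤ α⁻¹ ^ 2 * (α⁻¹ * ∫ a, ((∫ c, f (Function.update η x c) ∂(ν x (Function.update η x a)))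
          - f (Function.update η x a)) ^ 2 ∂(ν x η)) :=
          mul_le_mul_of_nonneg_left h2 (by positivity)
      _ = α⁻¹ ^ 3 * ∫ a, ((∫ c, f (Function.update η x c) ∂(ν x (Function.update η x a)))
          - f (Function.update η x a)) ^ 2 ∂(ν x η) := by ring
  refine ⟨hDsq_int, hVmeas, (hDmeas.pow_const 2), hVnonneg, ?_⟩
  calc ∫⁻ η, ENNReal.ofReal (∫ a, (f (Function.update η x a) - f η) ^ 2 ∂(ν x η)) ∂μ
      ≤ ∫⁻ η, ENNReal.ofReal (α⁻¹ ^ 3) * ∫⁻ a, ENNReal.ofReal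
          ((∫ c, (f (Function.update (Function.update η x a) x c)
            - f (Function.update η x a)) ∂(ν x (Function.update η x a))) ^ 2) ∂(ν x η) ∂μ := by
        refine lintegral_mono fun η => ?_
        refine le_trans (ENNReal.ofReal_le_ofReal (hpt η)) ?_
        rw [ENNReal.ofReal_mul (by positivity)]
        refine mul_le_mul_right (le_of_eq ?_) _
        exact ofReal_integral_eq_lintegral_ofReal (.of_finite)
          (Filter.Eventually.of_forall fun a => sq_nonneg _)
    _ = ENNReal.ofReal (α⁻¹ ^ 3) * ∫⁻ η, ∫⁻ a, ENNReal.ofReal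
          ((∫ c, (f (Function.update (Function.update η x a) x c)
            - f (Function.update η x a)) ∂(ν x (Function.update η x a))) ^ 2) ∂(ν x η) ∂μ :=
        lintegral_const_mul' _ _ ENNReal.ofReal_ne_top
    _ = ENNReal.ofReal (α⁻¹ ^ 3) *
          ∫⁻ η, ENNReal.ofReal ((∫ a, (f (Function.update η x a) - f η) ∂(ν x η)) ^ 2) ∂μ := by
        rw [← inv_lintegral hνmeas hinv x
          (fun ξ => ENNReal.ofReal ((∫ a, (f (Function.update ξ x a) - f ξ) ∂(ν x ξ)) ^ 2))
          ((hDmeas.pow_const 2).ennreal_ofReal)]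

end Main2


/-- If `E` is finite and `α := inf μ_{x,η}(e) > 0`, then for every `f ∈ L²(μ)` and every
site `x` the "reverse Jensen" inequality
`∫ Ψ_x(f−f(η))² dμ ≤ α⁻³ ∫ (D_x f)² dμ` holds, and consequently
`ℰ(f,f) ≤ α⁻³ ∑_x ∫ (D_x f)² dμ` (i.e. every `f ∈ L²(μ)` is good with constant `α⁻³`). -/
theorem stmt8 {E G : Type*} [Fintype E] [Nonempty E] [MeasurableSpace E]
    [MeasurableSingletonClass E] [Countable G] [DecidableEq G]
    (μ : Measure (G → E)) [IsProbabilityMeasure μ]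
    (ν : G → (G → E) → Measure E)
    (hνprob : ∀ x η, IsProbabilityMeasure (ν x η))
    (hνmeas : ∀ x : G, Measurable (ν x))
    (hinv : ∀ x : G,
      μ.bind (fun η => (ν x η).map (fun a => Function.update η x a)) = μ)
    (α : ℝ) (hα : 0 < α)
    (hαle : ∀ (x : G) (η : G → E) (e : E), α ≤ ((ν x η) {e}).toReal)
    (f : (G → E) → ℝ) (hf : MemLp f 2 μ) :
    (∀ x : G,
      ∫ η, (∫ a, (f (Function.update η x a) - f η) ^ 2 ∂(ν x η)) ∂μ ≤
        α⁻¹ ^ 3 *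
          ∫ η, (∫ a, (f (Function.update η x a) - f η) ∂(ν x η)) ^ 2 ∂μ) ∧
    (1 / 2 : ℝ≥0∞) *
        ∑' x : G,
          ∫⁻ η, ENNReal.ofReal (∫ a, (f (Function.update η x a) - f η) ^ 2 ∂(ν x η)) ∂μ ≤
      ENNReal.ofReal (α⁻¹ ^ 3) *
        ∑' x : G,
          ∫⁻ η, ENNReal.ofReal ((∫ a, (f (Function.update η x a) - f η) ∂(ν x η)) ^ 2) ∂μ := by
  -- replace f by a measurable representative
  set f' : (G → E) → ℝ := hf.1.mk f with hf'def
  have hf'meas : Measurable f' := hf.1.stronglyMeasurable_mk.measurable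
  have hff' : f =ᵐ[μ] f' := hf.1.ae_eq_mk
  have hf'mem : MemLp f' 2 μ := hf.ae_eq hff'
  -- the bad set and its preimages are null
  set N : Set (G → E) := toMeasurable μ {η | f η ≠ f' η} with hNdef
  have hNmeas : MeasurableSet N := measurableSet_toMeasurable μ _
  have hN : μ N = 0 := by
    rw [measure_toMeasurable]
    exact hff'
  have hNs : {η | f η ≠ f' η} ⊆ N := subset_toMeasurable μ _
  have hcongr : ∀ x : G, ∀ᵐ η ∂μ, f η = f' η ∧
      ∀ a : E, f (Function.update η x a) = f' (Function.update η x a) := by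
    intro x
    have hpre : ∀ a : E, μ ((fun η => Function.update η x a) ⁻¹' N) = 0 := by
      intro a
      have h1 := Measure.le_iff'.1 (map_le hνmeas hinv α hα hαle x a) N
      rw [Measure.map_apply measurable_update_left hNmeas] at h1
      have h2 : ((ENNReal.ofReal α)⁻¹ • μ) N = 0 := by
        rw [Measure.smul_apply, hN, smul_eq_mul, mul_zero]
      exact le_antisymm (h2 ▸ h1) (by positivity)
    have hbig : μ (N ∪ ⋃ a : E, (fun η => Function.update η x a) ⁻¹' N) = 0 :=
      measure_union_null hN (measure_iUnion_null hpre)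
    have hae := measure_eq_zero_iff_ae_notMem.1 hbig
    filter_upwards [hae] with η hη
    constructor
    · by_contra h
      exact hη (Or.inl (hNs h))
    · intro a
      by_contra h
      exact hη (Or.inr (Set.mem_iUnion.2 ⟨a, hNs h⟩))
  have hVcong : ∀ x : G,
      (fun η => ∫ a, (f (Function.update η x a) - f η) ^ 2 ∂(ν x η)) =ᵐ[μ]
      (fun η => ∫ a, (f' (Function.update η x a) - f' η) ^ 2 ∂(ν x η)) := by
    intro x
    filter_upwards [hcongr x] with η hη
    exact integral_congr_ae (Filter.Eventually.of_forall fun a => by simp only [hη.1, hη.2])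
  have hDcong : ∀ x : G,
      (fun η => (∫ a, (f (Function.update η x a) - f η) ∂(ν x η)) ^ 2) =ᵐ[μ]
      (fun η => (∫ a, (f' (Function.update η x a) - f' η) ∂(ν x η)) ^ 2) := by
    intro x
    filter_upwards [hcongr x] with η hη
    have he : (∫ a, (f (Function.update η x a) - f η) ∂(ν x η))
        = ∫ a, (f' (Function.update η x a) - f' η) ∂(ν x η) :=
      integral_congr_ae (Filter.Eventually.of_forall fun a => by simp only [hη.1, hη.2])
    simp only [he]
  constructor
  · intro x
    obtain ⟨hint, hVmeas, hDsqmeas, hVnn, hlin⟩ :=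
      aux_x hνprob hνmeas hinv α hα hαle hf'meas hf'mem x
    rw [integral_congr_ae (hVcong x), integral_congr_ae (hDcong x)]
    have hVle : ∫ η, (∫ a, (f' (Function.update η x a) - f' η) ^ 2 ∂(ν x η)) ∂μ
        = (∫⁻ η, ENNReal.ofReal
            (∫ a, (f' (Function.update η x a) - f' η) ^ 2 ∂(ν x η)) ∂μ).toReal :=
      integral_eq_lintegral_of_nonneg_ae (Filter.Eventually.of_forall hVnn)
        hVmeas.aestronglyMeasurable
    have hDle : ∫ η, (∫ a, (f' (Function.update η x a) - f' η) ∂(ν x η)) ^ 2 ∂μ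
        = (∫⁻ η, ENNReal.ofReal
            ((∫ a, (f' (Function.update η x a) - f' η) ∂(ν x η)) ^ 2) ∂μ).toReal :=
      integral_eq_lintegral_of_nonneg_ae (Filter.Eventually.of_forall fun η => sq_nonneg _)
        hDsqmeas.aestronglyMeasurable
    rw [hVle, hDle]
    have hfin : ∫⁻ η, ENNReal.ofReal
        ((∫ a, (f' (Function.update η x a) - f' η) ∂(ν x η)) ^ 2) ∂μ ≠ ∞ := by
      have heq : (fun η => ENNReal.ofReal
          ((∫ a, (f' (Function.update η x a) - f' η) ∂(ν x η)) ^ 2))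
          = fun η => ‖(∫ a, (f' (Function.update η x a) - f' η) ∂(ν x η)) ^ 2‖ₑ :=
        funext fun η => (Real.enorm_eq_ofReal (sq_nonneg _)).symm
      rw [heq]
      exact hint.2.ne
    calc (∫⁻ η, ENNReal.ofReal
          (∫ a, (f' (Function.update η x a) - f' η) ^ 2 ∂(ν x η)) ∂μ).toReal
        ≤ (ENNReal.ofReal (α⁻¹ ^ 3) * ∫⁻ η, ENNReal.ofReal
            ((∫ a, (f' (Function.update η x a) - f' η) ∂(ν x η)) ^ 2) ∂μ).toReal :=
          ENNReal.toReal_mono (ENNReal.mul_ne_top ENNReal.ofReal_ne_top hfin) hlin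
      _ = α⁻¹ ^ 3 * (∫⁻ η, ENNReal.ofReal
            ((∫ a, (f' (Function.update η x a) - f' η) ∂(ν x η)) ^ 2) ∂μ).toReal := by
          rw [ENNReal.toReal_mul, ENNReal.toReal_ofReal (by positivity)]
  · have hx : ∀ x : G,
        ∫⁻ η, ENNReal.ofReal (∫ a, (f (Function.update η x a) - f η) ^ 2 ∂(ν x η)) ∂μ ≤
          ENNReal.ofReal (α⁻¹ ^ 3) *
            ∫⁻ η, ENNReal.ofReal ((∫ a, (f (Function.update η x a) - f η) ∂(ν x η)) ^ 2) ∂μ := by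
      intro x
      have hL : ∫⁻ η, ENNReal.ofReal (∫ a, (f (Function.update η x a) - f η) ^ 2 ∂(ν x η)) ∂μ
          = ∫⁻ η, ENNReal.ofReal (∫ a, (f' (Function.update η x a) - f' η) ^ 2 ∂(ν x η)) ∂μ :=
        lintegral_congr_ae ((hVcong x).fun_comp ENNReal.ofReal)
      have hR : ∫⁻ η, ENNReal.ofReal
            ((∫ a, (f (Function.update η x a) - f η) ∂(ν x η)) ^ 2) ∂μ
          = ∫⁻ η, ENNReal.ofReal
            ((∫ a, (f' (Function.update η x a) - f' η) ∂(ν x η)) ^ 2) ∂μ :=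
        lintegral_congr_ae ((hDcong x).fun_comp ENNReal.ofReal)
      rw [hL, hR]
      exact (aux_x hνprob hνmeas hinv α hα hαle hf'meas hf'mem x).2.2.2.2
    calc (1 / 2 : ℝ≥0∞) *
          ∑' x : G, ∫⁻ η, ENNReal.ofReal
            (∫ a, (f (Function.update η x a) - f η) ^ 2 ∂(ν x η)) ∂μ
        ≤ 1 * ∑' x : G, ∫⁻ η, ENNReal.ofReal
            (∫ a, (f (Function.update η x a) - f η) ^ 2 ∂(ν x η)) ∂μ := by
          refine mul_le_mul_left (by norm_num) _
      _ = ∑' x : G, ∫⁻ η, ENNReal.ofReal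
            (∫ a, (f (Function.update η x a) - f η) ^ 2 ∂(ν x η)) ∂μ := one_mul _
      _ ≤ ∑' x : G, ENNReal.ofReal (α⁻¹ ^ 3) *
            ∫⁻ η, ENNReal.ofReal
              ((∫ a, (f (Function.update η x a) - f η) ∂(ν x η)) ^ 2) ∂μ :=
          ENNReal.tsum_le_tsum hx
      _ = ENNReal.ofReal (α⁻¹ ^ 3) *
            ∑' x : G, ∫⁻ η, ENNReal.ofReal
              ((∫ a, (f (Function.update η x a) - f η) ∂(ν x η)) ^ 2) ∂μ :=
          ENNReal.tsum_mul_left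
end

section
/- Let 𝒢 be a countable set, Ω = (𝒢 → Bool), and μ a probability measure on Ω. For each x ∈ 𝒢 and η ∈ Ω let μ_{x,η} be a probability measure on Bool (measurable in η), let κ_x be the Markov kernel sending η to the law of the configuration η updated at x to a random value a ~ μ_{x,η}, and assume μ is invariant under κ_x. For a measurable set A ⊆ Ω let A_x = {η : η ∈ A and η^x ∉ A}, where η^x is η with the coordinate at x flipped. Set α_x = inf{μ_{x,η}({e}) : η ∈ Ω, e ∈ Bool}. Then for every q ≥ 1: α_x^q · μ(A_x) ≤ ∫ |D_x 1_A|^q dμ ≤ 2 μ(A_x), where D_x 1_A(η) = ∫ 1_A dκ_x(η) − 1_A(η). -/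
open MeasureTheory Real

/-- `D_x 𝟙_A (η) = ∫ 𝟙_A dκ_x(η) − 𝟙_A(η)`, where `κ_x(η)` is the law of `η` updated at `x`
with a value drawn from `ν η`. -/
noncomputable def DInd {G : Type*} [DecidableEq G] (x : G)
    (ν : (G → Bool) → Measure Bool) (A : Set (G → Bool)) (η : G → Bool) : ℝ :=
  (∫ ξ, A.indicator (fun _ => (1 : ℝ)) ξ ∂((ν η).map (fun a => Function.update η x a))) -
    A.indicator (fun _ => (1 : ℝ)) η

lemma measurable_updval {G : Type*} [DecidableEq G] (x : G) (a : Bool) :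
    Measurable (fun η : G → Bool => Function.update η x a) := by
  refine measurable_pi_lambda _ fun y => ?_
  simp only [Function.update_apply]
  by_cases h : y = x <;> simp [h, measurable_pi_apply]

lemma measurable_flipat {G : Type*} [DecidableEq G] (x : G) :
    Measurable (fun η : G → Bool => Function.update η x (!(η x))) := by
  refine measurable_pi_lambda _ fun y => ?_
  simp only [Function.update_apply]
  by_cases h : y = x
  · simp only [h, if_pos rfl]
    exact (Measurable.of_discrete (f := Bool.not)).comp (measurable_pi_apply x)
  · simp [h, measurable_pi_apply]

lemma bool_sum_one (m : Measure Bool) [IsProbabilityMeasure m] :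
    (m {true}).toReal + (m {false}).toReal = 1 := by
  have hu : ({true} : Set Bool) ∪ {false} = Set.univ := by ext b; cases b <;> simp
  rw [← ENNReal.toReal_add (measure_ne_top _ _) (measure_ne_top _ _),
    ← measure_union (by simp) (measurableSet_singleton _), hu, measure_univ, ENNReal.toReal_one]

lemma bool_meas_apply (m : Measure Bool) (s : Set Bool) :
    m s = s.indicator (fun b => m {b}) true + s.indicator (fun b => m {b}) false := by
  classical
  simp only [Set.indicator_apply]
  have hu : ({true} : Set Bool) ∪ {false} = Set.univ := by ext b; cases b <;> simp
  by_cases h1 : true ∈ s <;> by_cases h2 : false ∈ s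
  · have : s = Set.univ := by ext b; cases b <;> simp [h1, h2]
    rw [this, ← hu, measure_union (by simp) (measurableSet_singleton _)]
    simp [h1, h2]
  · have : s = {true} := by ext b; cases b <;> simp [h1, h2]
    rw [this]; simp [h1, h2]
  · have : s = {false} := by ext b; cases b <;> simp [h1, h2]
    rw [this]; simp [h1, h2]
  · have : s = ∅ := by ext b; cases b <;> simp [h1, h2]
    rw [this]; simp [h1, h2]

lemma measurable_kernelDInd {G : Type*} [DecidableEq G] (x : G)
    (ν : (G → Bool) → Measure Bool) (hνmeas : Measurable ν) :
    Measurable (fun η : G → Bool => (ν η).map (fun a => Function.update η x a)) := by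
  apply Measure.measurable_of_measurable_coe
  intro s hs
  have hrw : (fun η : G → Bool => ((ν η).map (fun a => Function.update η x a)) s)
      = fun η => (((fun η : G → Bool => Function.update η x true) ⁻¹' s).indicator
          (fun η => ν η {true}) η)
        + (((fun η : G → Bool => Function.update η x false) ⁻¹' s).indicator
          (fun η => ν η {false}) η) := by
    funext η
    rw [Measure.map_apply (measurable_update η) hs, bool_meas_apply]
    rfl
  rw [hrw]
  exact (((Measure.measurable_coe (measurableSet_singleton _)).comp hνmeas).indicator
      ((measurable_updval x true) hs)).add
    (((Measure.measurable_coe (measurableSet_singleton _)).comp hνmeas).indicator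
      ((measurable_updval x false) hs))

lemma DInd_eq {G : Type*} [DecidableEq G] (x : G)
    (ν : (G → Bool) → Measure Bool) (hνprob : ∀ η, IsProbabilityMeasure (ν η))
    (A : Set (G → Bool)) (hA : MeasurableSet A) (η : G → Bool) :
    DInd x ν A η = ((ν η) {!(η x)}).toReal *
      (A.indicator (fun _ => (1:ℝ)) (Function.update η x (!(η x))) -
        A.indicator (fun _ => (1:ℝ)) η) := by
  have hprob := hνprob η
  have hsum := bool_sum_one (ν η)
  have hmap : (∫ ξ, A.indicator (fun _ => (1 : ℝ)) ξ ∂((ν η).map (fun a => Function.update η x a)))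
      = ((ν η) {true}).toReal • A.indicator (fun _ => (1:ℝ)) (Function.update η x true)
        + ((ν η) {false}).toReal • A.indicator (fun _ => (1:ℝ)) (Function.update η x false) := by
    rw [integral_map (measurable_update η).aemeasurable
      ((measurable_const.indicator hA).aestronglyMeasurable),
      integral_fintype _, Fintype.sum_bool]
    rfl
    exact Integrable.of_finite
  rw [DInd, hmap]
  cases hx : η x
  · have h2 : Function.update η x false = η := by rw [← hx]; exact Function.update_eq_self x η
    rw [h2]
    simp only [Bool.not_false, smul_eq_mul]
    linear_combination A.indicator (fun _ => (1:ℝ)) η * hsum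
  · have h2 : Function.update η x true = η := by rw [← hx]; exact Function.update_eq_self x η
    rw [h2]
    simp only [Bool.not_true, smul_eq_mul]
    linear_combination A.indicator (fun _ => (1:ℝ)) η * hsum

/-- For an event `A`, `A_x = {η ∈ A : η^x ∉ A}` and `α_x = inf_{η,e} μ_{x,η}(e)`, and every
real `q ≥ 1`: `α_x^q · μ(A_x) ≤ ∫ |D_x 𝟙_A|^q dμ ≤ 2 μ(A_x)`. -/
theorem stmt9 {G : Type*} [Countable G] [DecidableEq G]
    (μ : Measure (G → Bool)) [IsProbabilityMeasure μ]
    (x : G) (ν : (G → Bool) → Measure Bool)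
    (hνprob : ∀ η, IsProbabilityMeasure (ν η))
    (hνmeas : Measurable ν)
    (hinv : μ.bind (fun η => (ν η).map (fun a => Function.update η x a)) = μ)
    (A : Set (G → Bool)) (hA : MeasurableSet A)
    (Ax : Set (G → Bool))
    (hAx : Ax = {η | η ∈ A ∧ Function.update η x (!(η x)) ∉ A})
    (αx : ℝ) (hαx0 : 0 ≤ αx)
    (hαx : ∀ (η : G → Bool) (e : Bool), αx ≤ ((ν η) {e}).toReal)
    (q : ℝ) (hq : 1 ≤ q) :
    αx ^ q * (μ Ax).toReal ≤ ∫ η, |DInd x ν A η| ^ q ∂μ ∧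
    ∫ η, |DInd x ν A η| ^ q ∂μ ≤ 2 * (μ Ax).toReal := by
  subst hAx
  set fl : (G → Bool) → (G → Bool) := fun η => Function.update η x (!(η x)) with hfl
  set indA : (G → Bool) → ℝ := A.indicator (fun _ => (1:ℝ)) with hindA
  set P : (G → Bool) → ℝ := fun η => ((ν η) {!(η x)}).toReal with hP
  set Ax : Set (G → Bool) := {η | η ∈ A ∧ fl η ∉ A} with hAxdef
  set A' : Set (G → Bool) := {η | η ∉ A ∧ fl η ∈ A} with hA'def
  have hq0 : (0:ℝ) < q := lt_of_lt_of_le zero_lt_one hq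
  have hflm : Measurable fl := measurable_flipat x
  have hindAm : Measurable indA := measurable_const.indicator hA
  have hAxm : MeasurableSet Ax := by
    have : Ax = A ∩ (fl ⁻¹' A)ᶜ := rfl
    rw [this]; exact hA.inter ((hflm hA).compl)
  have hA'm : MeasurableSet A' := by
    have : A' = Aᶜ ∩ (fl ⁻¹' A) := rfl
    rw [this]; exact hA.compl.inter (hflm hA)
  have hPm : Measurable P := by
    have hPrw : P = fun η => if η x = true then ((ν η) {false}).toReal
        else ((ν η) {true}).toReal := by
      funext η; cases h : η x <;> simp [hP, h]
    rw [hPrw]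
    refine Measurable.ite ?_ ?_ ?_
    · show MeasurableSet ((fun η : G → Bool => η x) ⁻¹' {true})
      exact (measurable_pi_apply x) (measurableSet_singleton true)
    · exact ((Measure.measurable_coe (measurableSet_singleton _)).comp hνmeas).ennreal_toReal
    · exact ((Measure.measurable_coe (measurableSet_singleton _)).comp hνmeas).ennreal_toReal
  have hP0 : ∀ η, 0 ≤ P η := fun η => ENNReal.toReal_nonneg
  have hP1 : ∀ η, P η ≤ 1 := by
    intro η
    have := hνprob η
    simpa using ENNReal.toReal_mono ENNReal.one_ne_top (prob_le_one (μ := ν η))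
  have hPα : ∀ η, αx ≤ P η := fun η => hαx η (!(η x))
  have hD : ∀ η, DInd x ν A η = P η * (indA (fl η) - indA η) :=
    fun η => DInd_eq x ν hνprob A hA η
  have hDfun : DInd x ν A = fun η => P η * (indA (fl η) - indA η) := funext hD
  have hDm : Measurable (DInd x ν A) := by
    rw [hDfun]; exact hPm.mul ((hindAm.comp hflm).sub hindAm)
  -- indicator decompositions
  have he : ∀ η, indA (fl η) - indA η
      = A'.indicator (fun _ => (1:ℝ)) η - Ax.indicator (fun _ => (1:ℝ)) η := by
    intro η
    by_cases h1 : η ∈ A <;> by_cases h2 : fl η ∈ A <;>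
      simp [hindA, hAxdef, hA'def, Set.indicator_apply, h1, h2]
  have habs : ∀ η, |indA (fl η) - indA η|
      = A'.indicator (fun _ => (1:ℝ)) η + Ax.indicator (fun _ => (1:ℝ)) η := by
    intro η
    by_cases h1 : η ∈ A <;> by_cases h2 : fl η ∈ A <;>
      simp [hindA, hAxdef, hA'def, Set.indicator_apply, h1, h2]
  have hiAx0 : ∀ η, 0 ≤ Ax.indicator (fun _ => (1:ℝ)) η :=
    fun η => Set.indicator_nonneg (fun _ _ => zero_le_one) η
  have hiA'0 : ∀ η, 0 ≤ A'.indicator (fun _ => (1:ℝ)) η :=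
    fun η => Set.indicator_nonneg (fun _ _ => zero_le_one) η
  have hDabsq : ∀ η, |DInd x ν A η| ^ q
      = P η ^ q * (A'.indicator (fun _ => (1:ℝ)) η + Ax.indicator (fun _ => (1:ℝ)) η) := by
    intro η
    rw [hD, abs_mul, abs_of_nonneg (hP0 η), Real.mul_rpow (hP0 η) (abs_nonneg _), ← habs]
    congr 1
    by_cases h1 : η ∈ A <;> by_cases h2 : fl η ∈ A <;>
      simp [hindA, Set.indicator_apply, h1, h2, Real.zero_rpow hq0.ne', Real.one_rpow]
  -- integrability helper
  have hInt : ∀ f : (G → Bool) → ℝ, Measurable f → (∀ η, |f η| ≤ 1) → Integrable f μ := by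
    intro f hf hb
    exact (integrable_const (1:ℝ)).mono' hf.aestronglyMeasurable
      (ae_of_all _ fun η => by simpa [Real.norm_eq_abs] using hb η)
  have hDle1 : ∀ η, |DInd x ν A η| ≤ 1 := by
    intro η
    rw [hD, abs_mul, abs_of_nonneg (hP0 η)]
    have h1 : |indA (fl η) - indA η| ≤ 1 := by
      by_cases h1 : η ∈ A <;> by_cases h2 : fl η ∈ A <;>
        simp [hindA, Set.indicator_apply, h1, h2]
    nlinarith [hP0 η, hP1 η, abs_nonneg (indA (fl η) - indA η)]
  have hqmeas : Measurable (fun η => |DInd x ν A η| ^ q) :=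
    (Real.continuous_rpow_const hq0.le).measurable.comp hDm.abs
  have hIntq : Integrable (fun η => |DInd x ν A η| ^ q) μ := by
    refine hInt _ hqmeas fun η => ?_
    rw [abs_of_nonneg (Real.rpow_nonneg (abs_nonneg _) q)]
    exact Real.rpow_le_one (abs_nonneg _) (hDle1 η) hq0.le
  -- zero integral
  have hκm := measurable_kernelDInd x ν hνmeas
  have hκA : Measurable (fun η => ((ν η).map (fun a => Function.update η x a)) A) :=
    (Measure.measurable_coe hA).comp hκm
  have hκle : ∀ η, ((ν η).map (fun a => Function.update η x a)) A ≤ 1 := by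
    intro η
    have := hνprob η
    have h1 : ((ν η).map (fun a => Function.update η x a)) A
        ≤ ((ν η).map (fun a => Function.update η x a)) Set.univ :=
      measure_mono (Set.subset_univ _)
    rwa [Measure.map_apply (measurable_update η) MeasurableSet.univ, Set.preimage_univ,
      measure_univ] at h1
  have hDeq2 : ∀ η, DInd x ν A η
      = (((ν η).map (fun a => Function.update η x a)) A).toReal - indA η := by
    intro η
    rw [DInd]
    congr 1
    exact integral_indicator_one hA
  have hbindA : ∫⁻ η, ((ν η).map (fun a => Function.update η x a)) A ∂μ = μ A := by
    rw [← Measure.bind_apply hA hκm.aemeasurable, hinv]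
  have hintκ : ∫ η, (((ν η).map (fun a => Function.update η x a)) A).toReal ∂μ
      = (μ A).toReal := by
    rw [integral_toReal hκA.aemeasurable
      (ae_of_all _ fun η => lt_of_le_of_lt (hκle η) ENNReal.one_lt_top), hbindA]
  have hindA1 : ∀ η, |indA η| ≤ 1 := by
    intro η; by_cases h : η ∈ A <;> simp [hindA, Set.indicator_apply, h]
  have hintA : ∫ η, indA η ∂μ = (μ A).toReal := integral_indicator_one hA
  have hIntκ : Integrable (fun η => (((ν η).map (fun a => Function.update η x a)) A).toReal) μ := by
    refine hInt _ hκA.ennreal_toReal fun η => ?_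
    rw [abs_of_nonneg ENNReal.toReal_nonneg]
    simpa using ENNReal.toReal_mono ENNReal.one_ne_top (hκle η)
  have hzero : ∫ η, DInd x ν A η ∂μ = 0 := by
    rw [funext hDeq2, integral_sub hIntκ (hInt _ hindAm hindA1), hintκ, hintA, sub_self]
  -- ∫ P·1_{A'} = ∫ P·1_{Ax}
  have hiAxm : Measurable (fun η => P η * Ax.indicator (fun _ => (1:ℝ)) η) :=
    hPm.mul (measurable_const.indicator hAxm)
  have hiA'm : Measurable (fun η => P η * A'.indicator (fun _ => (1:ℝ)) η) :=
    hPm.mul (measurable_const.indicator hA'm)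
  have hbAx : ∀ η, |P η * Ax.indicator (fun _ => (1:ℝ)) η| ≤ 1 := by
    intro η
    rw [abs_mul, abs_of_nonneg (hP0 η), abs_of_nonneg (hiAx0 η)]
    by_cases h : η ∈ Ax <;> simp [Set.indicator_apply, h, hP1 η]
  have hbA' : ∀ η, |P η * A'.indicator (fun _ => (1:ℝ)) η| ≤ 1 := by
    intro η
    rw [abs_mul, abs_of_nonneg (hP0 η), abs_of_nonneg (hiA'0 η)]
    by_cases h : η ∈ A' <;> simp [Set.indicator_apply, h, hP1 η]
  have hIntAx := hInt _ hiAxm hbAx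
  have hIntA' := hInt _ hiA'm hbA'
  have hPP : ∫ η, P η * A'.indicator (fun _ => (1:ℝ)) η ∂μ
      = ∫ η, P η * Ax.indicator (fun _ => (1:ℝ)) η ∂μ := by
    have hsub : (fun η => P η * A'.indicator (fun _ => (1:ℝ)) η
        - P η * Ax.indicator (fun _ => (1:ℝ)) η) = DInd x ν A := by
      funext η; rw [hD η, he η]; ring
    have h3 := integral_sub hIntA' hIntAx
    rw [hsub, hzero] at h3
    linarith
  constructor
  · -- lower bound
    have hlow : ∀ η, Ax.indicator (fun _ => αx ^ q) η ≤ |DInd x ν A η| ^ q := by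
      intro η
      rw [hDabsq η]
      by_cases hm : η ∈ Ax
      · rw [Set.indicator_of_mem hm]
        have h1 : Ax.indicator (fun _ => (1:ℝ)) η = 1 := Set.indicator_of_mem hm _
        have h2 : αx ^ q ≤ P η ^ q := Real.rpow_le_rpow hαx0 (hPα η) hq0.le
        have h3 : 0 ≤ P η ^ q := Real.rpow_nonneg (hP0 η) q
        nlinarith [hiA'0 η]
      · rw [Set.indicator_of_notMem hm]
        exact mul_nonneg (Real.rpow_nonneg (hP0 η) q) (add_nonneg (hiA'0 η) (hiAx0 η))
    have h5 := integral_mono_of_nonneg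
      (ae_of_all _ fun η => Set.indicator_nonneg (fun _ _ => Real.rpow_nonneg hαx0 q) η)
      hIntq (ae_of_all _ hlow)
    rwa [integral_indicator_const _ hAxm, smul_eq_mul, mul_comm] at h5
  · -- upper bound
    have hup : ∀ η, |DInd x ν A η| ^ q
        ≤ P η * A'.indicator (fun _ => (1:ℝ)) η + P η * Ax.indicator (fun _ => (1:ℝ)) η := by
      intro η
      rw [hDabsq η]
      have hPq : P η ^ q ≤ P η := by
        rcases eq_or_lt_of_le (hP0 η) with h | h
        · rw [← h, Real.zero_rpow hq0.ne']
        · calc P η ^ q ≤ P η ^ (1:ℝ) := Real.rpow_le_rpow_of_exponent_ge h (hP1 η) hq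
            _ = P η := Real.rpow_one _
      nlinarith [hiA'0 η, hiAx0 η, Real.rpow_nonneg (hP0 η) q]
    have h6 := integral_mono_of_nonneg
      (ae_of_all _ fun η => Real.rpow_nonneg (abs_nonneg _) q)
      (hIntA'.add hIntAx) (ae_of_all _ hup)
    simp only [Pi.add_apply] at h6
    rw [integral_add hIntA' hIntAx, hPP] at h6
    have h7 : ∫ η, P η * Ax.indicator (fun _ => (1:ℝ)) η ∂μ
        ≤ ∫ η, Ax.indicator (fun _ => (1:ℝ)) η ∂μ := by
      refine integral_mono_of_nonneg (ae_of_all _ fun η => mul_nonneg (hP0 η) (hiAx0 η))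
        (hInt _ (measurable_const.indicator hAxm) fun η => by
          by_cases h : η ∈ Ax <;> simp [Set.indicator_apply, h])
        (ae_of_all _ fun η => ?_)
      calc P η * Ax.indicator (fun _ => (1:ℝ)) η ≤ 1 * Ax.indicator (fun _ => (1:ℝ)) η :=
            mul_le_mul_of_nonneg_right (hP1 η) (hiAx0 η)
        _ = _ := one_mul _
    have h8 : ∫ η, Ax.indicator (fun _ => (1:ℝ)) η ∂μ = (μ Ax).toReal :=
      integral_indicator_one hAxm
    linarith
end

section
/- For all real numbers a and b: |a·√(log(1+a²)) − b·√(log(1+b²))| ≤ 2·√(log(1+max(a²,b²)))·|a−b|. -/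
open Real

private lemma log1p_nonneg {s : ℝ} (hs : 0 ≤ s) : 0 ≤ Real.log (1 + s) :=
  Real.log_nonneg (by linarith)

private lemma log1p_mono {s t : ℝ} (hs : 0 ≤ s) (h : s ≤ t) :
    Real.log (1 + s) ≤ Real.log (1 + t) :=
  Real.log_le_log (by linarith) (by linarith)

private lemma L_lb (x : ℝ) : x ^ 2 / (1 + x ^ 2) ≤ Real.log (1 + x ^ 2) := by
  have h0 : (0:ℝ) < 1 + x ^ 2 := by positivity
  have h := Real.log_le_sub_one_of_pos (show 0 < (1 + x ^ 2)⁻¹ by positivity)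
  rw [Real.log_inv] at h
  have h2 : (1 + x ^ 2)⁻¹ - 1 = -(x ^ 2 / (1 + x ^ 2)) := by field_simp; ring
  linarith [h2 ▸ h]

private lemma hderiv {x : ℝ} (hx : 0 < x) :
    HasDerivAt (fun y : ℝ => y * Real.sqrt (Real.log (1 + y ^ 2)))
      (1 * Real.sqrt (Real.log (1 + x ^ 2)) +
        x * (2 * x / (1 + x ^ 2) / (2 * Real.sqrt (Real.log (1 + x ^ 2))))) x := by
  have h0 : (0:ℝ) < 1 + x ^ 2 := by positivity
  have hL : 0 < Real.log (1 + x ^ 2) := Real.log_pos (by nlinarith)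
  have h1 : HasDerivAt (fun y : ℝ => 1 + y ^ 2) (2 * x) x := by
    simpa using (hasDerivAt_pow 2 x).const_add 1
  have h2 := h1.log h0.ne'
  have h3 := h2.sqrt hL.ne'
  exact (hasDerivAt_id x).mul h3

private lemma key {a b : ℝ} (hb : 0 ≤ b) (hba : b ≤ a) :
    |a * Real.sqrt (Real.log (1 + a ^ 2)) - b * Real.sqrt (Real.log (1 + b ^ 2))| ≤
      2 * Real.sqrt (Real.log (1 + a ^ 2)) * (a - b) := by
  have ha : 0 ≤ a := le_trans hb hba
  have hsq : b ^ 2 ≤ a ^ 2 := by nlinarith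
  have smono : Real.sqrt (Real.log (1 + b ^ 2)) ≤ Real.sqrt (Real.log (1 + a ^ 2)) :=
    Real.sqrt_le_sqrt (log1p_mono (by positivity) hsq)
  have fmono : b * Real.sqrt (Real.log (1 + b ^ 2)) ≤ a * Real.sqrt (Real.log (1 + a ^ 2)) :=
    mul_le_mul hba smono (Real.sqrt_nonneg _) ha
  rw [abs_of_nonneg (sub_nonneg.2 fmono)]
  rcases eq_or_lt_of_le hba with rfl | hlt
  · simp
  rcases eq_or_lt_of_le hb with rfl | hbpos
  · have hs := Real.sqrt_nonneg (Real.log (1 + a ^ 2))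
    nlinarith
  -- MVT case
  have hcont : Continuous (fun y : ℝ => y * Real.sqrt (Real.log (1 + y ^ 2))) := by
    apply continuous_id.mul
    apply Real.continuous_sqrt.comp
    rw [continuous_iff_continuousAt]
    intro y
    exact (Real.continuousAt_log (by positivity)).comp (by fun_prop)
  obtain ⟨c, hc, hceq⟩ := exists_hasDerivAt_eq_slope
    (fun y : ℝ => y * Real.sqrt (Real.log (1 + y ^ 2)))
    (fun y : ℝ => 1 * Real.sqrt (Real.log (1 + y ^ 2)) +
        y * (2 * y / (1 + y ^ 2) / (2 * Real.sqrt (Real.log (1 + y ^ 2)))))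
    hlt hcont.continuousOn
    (fun y hy => hderiv (lt_trans hbpos hy.1))
  have hab : (0:ℝ) < a - b := sub_pos.2 hlt
  have heq : a * Real.sqrt (Real.log (1 + a ^ 2)) - b * Real.sqrt (Real.log (1 + b ^ 2)) =
      (1 * Real.sqrt (Real.log (1 + c ^ 2)) +
        c * (2 * c / (1 + c ^ 2) / (2 * Real.sqrt (Real.log (1 + c ^ 2))))) * (a - b) := by
    rw [hceq, div_mul_cancel₀ _ hab.ne']
  rw [heq]
  have hc0 : 0 < c := lt_trans hbpos hc.1
  have hLc : 0 < Real.log (1 + c ^ 2) := Real.log_pos (by nlinarith)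
  have hscpos : 0 < Real.sqrt (Real.log (1 + c ^ 2)) := Real.sqrt_pos.2 hLc
  have hsc_le : Real.sqrt (Real.log (1 + c ^ 2)) ≤ Real.sqrt (Real.log (1 + a ^ 2)) :=
    Real.sqrt_le_sqrt (log1p_mono (by positivity) (by nlinarith [hc.2, hc0.le]))
  have hbound : c * (2 * c / (1 + c ^ 2) / (2 * Real.sqrt (Real.log (1 + c ^ 2)))) ≤
      Real.sqrt (Real.log (1 + c ^ 2)) := by
    have hsq : Real.sqrt (Real.log (1 + c ^ 2)) ^ 2 = Real.log (1 + c ^ 2) :=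
      Real.sq_sqrt hLc.le
    have hlb := L_lb c
    have h1c : (0:ℝ) < 1 + c ^ 2 := by positivity
    have hlb' : c ^ 2 ≤ Real.log (1 + c ^ 2) * (1 + c ^ 2) := (div_le_iff₀ h1c).mp hlb
    have hrw : c * (2 * c / (1 + c ^ 2) / (2 * Real.sqrt (Real.log (1 + c ^ 2)))) =
        c ^ 2 / ((1 + c ^ 2) * Real.sqrt (Real.log (1 + c ^ 2))) := by
      field_simp
    rw [hrw, div_le_iff₀ (by positivity)]
    nlinarith [hsq]
  apply mul_le_mul_of_nonneg_right _ hab.le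
  nlinarith [hsc_le, hbound]


private lemma main_nn {a b : ℝ} (ha : 0 ≤ a) (hb : 0 ≤ b) :
    |a * Real.sqrt (Real.log (1 + a ^ 2)) - b * Real.sqrt (Real.log (1 + b ^ 2))| ≤
      2 * Real.sqrt (Real.log (1 + max (a ^ 2) (b ^ 2))) * |a - b| := by
  rcases le_total b a with h | h
  · have hm : max (a ^ 2) (b ^ 2) = a ^ 2 := max_eq_left (by nlinarith)
    rw [hm, abs_of_nonneg (sub_nonneg.2 h)]
    exact key hb h
  · have hm : max (a ^ 2) (b ^ 2) = b ^ 2 := max_eq_right (by nlinarith)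
    rw [hm, abs_sub_comm a b, abs_of_nonneg (sub_nonneg.2 h),
      abs_sub_comm (a * Real.sqrt (Real.log (1 + a ^ 2)))]
    exact key ha h

private lemma mixed {a b : ℝ} (ha : 0 ≤ a) (hb : b ≤ 0) :
    |a * Real.sqrt (Real.log (1 + a ^ 2)) - b * Real.sqrt (Real.log (1 + b ^ 2))| ≤
      2 * Real.sqrt (Real.log (1 + max (a ^ 2) (b ^ 2))) * |a - b| := by
  have hsa : Real.sqrt (Real.log (1 + a ^ 2)) ≤
      Real.sqrt (Real.log (1 + max (a ^ 2) (b ^ 2))) :=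
    Real.sqrt_le_sqrt (log1p_mono (by positivity) (le_max_left _ _))
  have hsb : Real.sqrt (Real.log (1 + b ^ 2)) ≤
      Real.sqrt (Real.log (1 + max (a ^ 2) (b ^ 2))) :=
    Real.sqrt_le_sqrt (log1p_mono (by positivity) (le_max_right _ _))
  have hsbn := Real.sqrt_nonneg (Real.log (1 + b ^ 2))
  have hsan := Real.sqrt_nonneg (Real.log (1 + a ^ 2))
  have hsMn := Real.sqrt_nonneg (Real.log (1 + max (a ^ 2) (b ^ 2)))
  have h1 : |a - b| = a - b := abs_of_nonneg (by linarith)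
  have h2 : |a * Real.sqrt (Real.log (1 + a ^ 2)) - b * Real.sqrt (Real.log (1 + b ^ 2))| =
      a * Real.sqrt (Real.log (1 + a ^ 2)) - b * Real.sqrt (Real.log (1 + b ^ 2)) :=
    abs_of_nonneg (by nlinarith)
  rw [h1, h2]
  nlinarith [mul_le_mul_of_nonneg_left hsa ha,
    mul_le_mul_of_nonneg_left hsb (neg_nonneg.2 hb),
    mul_nonneg hsMn (show (0:ℝ) ≤ a - b by linarith)]

/-- For all reals `a, b`:
`|a√(log(1+a²)) − b√(log(1+b²))| ≤ 2√(log(1+max(a²,b²))) |a−b|`. -/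
theorem stmt13 (a b : ℝ) :
    |a * Real.sqrt (Real.log (1 + a ^ 2)) - b * Real.sqrt (Real.log (1 + b ^ 2))| ≤
      2 * Real.sqrt (Real.log (1 + max (a ^ 2) (b ^ 2))) * |a - b| := by
  rcases le_total 0 a with ha | ha <;> rcases le_total 0 b with hb | hb
  · exact main_nn ha hb
  · exact mixed ha hb
  · rw [abs_sub_comm a b, abs_sub_comm (a * Real.sqrt (Real.log (1 + a ^ 2))), max_comm]
    exact mixed hb ha
  · have h := main_nn (a := -a) (b := -b) (by linarith) (by linarith)
    simp only [neg_sq] at h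
    calc |a * Real.sqrt (Real.log (1 + a ^ 2)) - b * Real.sqrt (Real.log (1 + b ^ 2))|
        = |(-a) * Real.sqrt (Real.log (1 + a ^ 2)) - (-b) * Real.sqrt (Real.log (1 + b ^ 2))| := by
          rw [← abs_neg]; ring_nf
      _ ≤ 2 * Real.sqrt (Real.log (1 + max (a ^ 2) (b ^ 2))) * |(-a) - (-b)| := h
      _ = 2 * Real.sqrt (Real.log (1 + max (a ^ 2) (b ^ 2))) * |a - b| := by
          rw [show (-a) - (-b) = -(a-b) by ring, abs_neg]
end

section
/- Let μ be a probability measure on a measurable space Ω and f ∈ L²(μ). Then (∫ |f|·√(log(1+f²)) dμ)² ≤ (∫ f² dμ) · log(1 + ∫ f² dμ). -/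
open MeasureTheory Real

lemma concave_log1p : ConcaveOn ℝ (Set.Ici 0) (fun x : ℝ => Real.log (1 + x)) := by
  have h := (strictConcaveOn_log_Ioi.concaveOn).comp_affineMap
    (AffineMap.const ℝ ℝ (1:ℝ) + AffineMap.id ℝ ℝ)
  have heq : ⇑(AffineMap.const ℝ ℝ (1:ℝ) + AffineMap.id ℝ ℝ) = fun x : ℝ => 1 + x := by
    funext x; simp
  rw [heq] at h
  refine (h.subset ?_ (convex_Ici 0))
  intro x hx
  simp only [Set.mem_preimage, Set.mem_Ioi]
  linarith [Set.mem_Ici.mp hx]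

/-- For `f ∈ L²(μ)` with `μ` a probability measure:
`(∫ |f|√(log(1+f²)) dμ)² ≤ (∫ f² dμ) · log(1 + ∫ f² dμ)`. -/
theorem stmt14 {Ω : Type*} [MeasurableSpace Ω] (μ : Measure Ω) [IsProbabilityMeasure μ]
    (f : Ω → ℝ) (hf : MemLp f 2 μ) :
    (∫ x, |f x| * Real.sqrt (Real.log (1 + (f x) ^ 2)) ∂μ) ^ 2 ≤
      (∫ x, (f x) ^ 2 ∂μ) * Real.log (1 + ∫ x, (f x) ^ 2 ∂μ) := by
  set g : Ω → ℝ := fun x => Real.sqrt (Real.log (1 + (f x) ^ 2)) with hg_def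
  have hlog_nonneg : ∀ x, 0 ≤ Real.log (1 + (f x) ^ 2) := fun x =>
    Real.log_nonneg (by nlinarith [sq_nonneg (f x)])
  have hlog_le : ∀ x, Real.log (1 + (f x) ^ 2) ≤ (f x) ^ 2 := fun x => by
    have := Real.log_le_sub_one_of_pos (x := 1 + (f x) ^ 2) (by nlinarith [sq_nonneg (f x)])
    linarith
  have hg_le : ∀ x, g x ≤ |f x| := fun x => by
    rw [hg_def]
    calc Real.sqrt (Real.log (1 + (f x) ^ 2)) ≤ Real.sqrt ((f x) ^ 2) :=
          Real.sqrt_le_sqrt (hlog_le x)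
      _ = |f x| := Real.sqrt_sq_eq_abs (f x)
  have hg_nonneg : ∀ x, 0 ≤ g x := fun x => Real.sqrt_nonneg _
  have hg_meas : AEStronglyMeasurable g μ := by
    have : Continuous fun t : ℝ => Real.sqrt (Real.log (1 + t ^ 2)) :=
      (Continuous.log (by continuity) (fun x => by positivity)).sqrt
    exact this.comp_aestronglyMeasurable hf.1
  have habs : MemLp (fun x => |f x|) 2 μ := hf.abs
  have hg_mem : MemLp g 2 μ := by
    refine habs.of_le hg_meas ?_
    filter_upwards with x
    rw [Real.norm_of_nonneg (hg_nonneg x), Real.norm_of_nonneg (abs_nonneg _)]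
    exact hg_le x
  have hsq : Integrable (fun x => (f x) ^ 2) μ := hf.integrable_sq
  have hloginteg : Integrable (fun x => Real.log (1 + (f x) ^ 2)) μ := by
    refine hsq.mono ?_ ?_
    · have : Continuous fun t : ℝ => Real.log (1 + t ^ 2) :=
        Continuous.log (by continuity) (fun x => by positivity)
      exact this.comp_aestronglyMeasurable hf.1
    · filter_upwards with x
      rw [Real.norm_of_nonneg (hlog_nonneg x), Real.norm_of_nonneg (sq_nonneg _)]
      exact hlog_le x
  set S := ∫ x, (f x) ^ 2 ∂μ with hS
  have hS_nonneg : 0 ≤ S := integral_nonneg fun x => sq_nonneg _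
  have hT_le : (∫ x, Real.log (1 + (f x) ^ 2) ∂μ) ≤ Real.log (1 + S) := by
    have hJ := concave_log1p.le_map_integral (μ := μ) (f := fun x => (f x) ^ 2)
      (by
        apply ContinuousOn.log
        · fun_prop
        · intro x hx
          have : (0:ℝ) ≤ x := hx
          positivity)
      isClosed_Ici
      (Filter.Eventually.of_forall fun x => Set.mem_Ici.mpr (sq_nonneg _))
      hsq (by exact hloginteg)
    simpa using hJ
  have hT_nonneg : 0 ≤ ∫ x, Real.log (1 + (f x) ^ 2) ∂μ :=
    integral_nonneg fun x => hlog_nonneg x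
  -- Cauchy-Schwarz
  have hCS : (∫ x, |f x| * g x ∂μ) ≤
      (∫ x, |f x| ^ (2:ℝ) ∂μ) ^ (1/(2:ℝ)) * (∫ x, g x ^ (2:ℝ) ∂μ) ^ (1/(2:ℝ)) := by
    refine integral_mul_le_Lp_mul_Lq_of_nonneg (Real.HolderConjugate.two_two : Real.HolderConjugate 2 2)
      (Filter.Eventually.of_forall fun x => abs_nonneg _)
      (Filter.Eventually.of_forall fun x => hg_nonneg x) ?_ ?_
    · simpa using habs
    · simpa using hg_mem
  have h1 : (∫ x, |f x| ^ (2:ℝ) ∂μ) = S := by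
    rw [hS]
    refine integral_congr_ae (Filter.Eventually.of_forall fun x => ?_)
    simp only [show ((2:ℝ)) = ((2:ℕ):ℝ) by norm_num, Real.rpow_natCast, sq_abs]
  have h2 : (∫ x, g x ^ (2:ℝ) ∂μ) = ∫ x, Real.log (1 + (f x) ^ 2) ∂μ := by
    refine integral_congr_ae (Filter.Eventually.of_forall fun x => ?_)
    simp only [show ((2:ℝ)) = ((2:ℕ):ℝ) by norm_num, Real.rpow_natCast, hg_def]
    exact Real.sq_sqrt (hlog_nonneg x)
  rw [h1, h2] at hCS
  have hA_nonneg : 0 ≤ ∫ x, |f x| * g x ∂μ :=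
    integral_nonneg fun x => mul_nonneg (abs_nonneg _) (hg_nonneg x)
  have key : (∫ x, |f x| * g x ∂μ) ^ 2 ≤ S * (∫ x, Real.log (1 + (f x) ^ 2) ∂μ) := by
    calc (∫ x, |f x| * g x ∂μ) ^ 2
        ≤ (S ^ (1/(2:ℝ)) * (∫ x, Real.log (1 + (f x) ^ 2) ∂μ) ^ (1/(2:ℝ))) ^ 2 := by
          apply pow_le_pow_left₀ hA_nonneg hCS
      _ = S * (∫ x, Real.log (1 + (f x) ^ 2) ∂μ) := by
          rw [mul_pow, ← Real.rpow_natCast (S ^ (1/(2:ℝ))) 2,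
            ← Real.rpow_natCast ((∫ x, Real.log (1 + (f x) ^ 2) ∂μ) ^ (1/(2:ℝ))) 2,
            ← Real.rpow_mul hS_nonneg, ← Real.rpow_mul hT_nonneg]
          norm_num
  calc (∫ x, |f x| * g x ∂μ) ^ 2 ≤ S * (∫ x, Real.log (1 + (f x) ^ 2) ∂μ) := key
    _ ≤ S * Real.log (1 + S) := by
        exact mul_le_mul_of_nonneg_left hT_le hS_nonneg
end

section
/- Let 𝒢 be a countable set and Ω = (𝒢 → Bool) ordered coordinatewise. Let (Ω', P) be a probability space and η, ξ : Ω' → Ω measurable random configurations with ξ ≤ η almost surely. Let A ⊆ Ω be a measurable increasing event (η ∈ A and ζ ≥ η imply ζ ∈ A) and Λ ⊆ 𝒢 a finite set. Then P(η ∈ A) − P(ξ ∈ A) ≥ Σ_{x∈Λ} P(η ∈ A, η^x ∉ A, and {y ∈ Λ : η(y) ≠ ξ(y)} = {x}), where η^x denotes η with the coordinate at x flipped. -/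
open MeasureTheory

/-- Monotone-coupling lower bound used in Russo's formula: if `ξ ≤ η` a.s. and `A` is an
increasing event, then for any finite `Λ`,
`P(η ∈ A) − P(ξ ∈ A) ≥ ∑_{x∈Λ} P(η ∈ A, η^x ∉ A, {y ∈ Λ : η(y) ≠ ξ(y)} = {x})`. -/
theorem stmt17 {G : Type*} [Countable G] [DecidableEq G]
    {Ω' : Type*} [MeasurableSpace Ω'] (P : Measure Ω') [IsProbabilityMeasure P]
    (η ξ : Ω' → (G → Bool)) (hη : Measurable η) (hξ : Measurable ξ)
    (hle : ∀ᵐ ω ∂P, ξ ω ≤ η ω)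
    (A : Set (G → Bool)) (hA : MeasurableSet A)
    (hincr : ∀ ⦃a b : G → Bool⦄, a ∈ A → a ≤ b → b ∈ A)
    (Λ : Finset G) :
    (P {ω | η ω ∈ A}).toReal - (P {ω | ξ ω ∈ A}).toReal ≥
      ∑ x ∈ Λ,
        (P {ω | η ω ∈ A ∧ Function.update (η ω) x (!(η ω x)) ∉ A ∧
          Λ.filter (fun y => η ω y ≠ ξ ω y) = {x}}).toReal := by
  have hcoord : ∀ y : G, Measurable fun ω => η ω y := fun y => (measurable_pi_apply y).comp hη
  have hcoordξ : ∀ y : G, Measurable fun ω => ξ ω y := fun y => (measurable_pi_apply y).comp hξ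
  set Aη : Set Ω' := {ω | η ω ∈ A} with hAηdef
  set Aξ : Set Ω' := {ω | ξ ω ∈ A} with hAξdef
  have hmAη : MeasurableSet Aη := hη hA
  have hmAξ : MeasurableSet Aξ := hξ hA
  set S : G → Set Ω' := fun x => {ω | η ω ∈ A ∧ Function.update (η ω) x (!(η ω x)) ∉ A ∧
      Λ.filter (fun y => η ω y ≠ ξ ω y) = {x}} with hSdef
  -- characterization of the filter condition
  have hfilter : ∀ (ω : Ω') (x : G),
      Λ.filter (fun y => η ω y ≠ ξ ω y) = {x} ↔
        x ∈ Λ ∧ η ω x ≠ ξ ω x ∧ ∀ y ∈ Λ, y ≠ x → η ω y = ξ ω y := by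
    intro ω x
    constructor
    · intro h
      have hx : x ∈ Λ.filter (fun y => η ω y ≠ ξ ω y) := by
        rw [h]; exact Finset.mem_singleton_self x
      rw [Finset.mem_filter] at hx
      refine ⟨hx.1, hx.2, ?_⟩
      intro y hy hyx
      by_contra hne
      have : y ∈ Λ.filter (fun y => η ω y ≠ ξ ω y) := Finset.mem_filter.mpr ⟨hy, hne⟩
      rw [h, Finset.mem_singleton] at this
      exact hyx this
    · rintro ⟨hxΛ, hxne, hrest⟩
      ext y
      rw [Finset.mem_filter, Finset.mem_singleton]
      constructor
      · rintro ⟨hyΛ, hyne⟩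
        by_contra hyx
        exact hyne (hrest y hyΛ hyx)
      · rintro rfl
        exact ⟨hxΛ, hxne⟩
  -- measurability of the flip map
  have hflip : ∀ x : G, Measurable fun ω => Function.update (η ω) x (!(η ω x)) := by
    intro x
    apply measurable_pi_lambda
    intro y
    by_cases h : y = x
    · subst h
      simp only [Function.update_self]
      exact (measurable_of_countable Bool.not).comp (hcoord y)
    · simp only [Function.update_of_ne h]
      exact hcoord y
  -- measurability of the filter condition
  have hmT : ∀ x : G, MeasurableSet {ω | Λ.filter (fun y => η ω y ≠ ξ ω y) = {x}} := by
    intro x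
    by_cases hxΛ : x ∈ Λ
    · have heq : {ω | Λ.filter (fun y => η ω y ≠ ξ ω y) = {x}} =
          {ω | η ω x = ξ ω x}ᶜ ∩ ⋂ y ∈ Λ, {ω | y ≠ x → η ω y = ξ ω y} := by
        ext ω
        simp only [Set.mem_setOf_eq, Set.mem_inter_iff, Set.mem_compl_iff, Set.mem_iInter,
          hfilter ω x]
        tauto
      rw [heq]
      refine (MeasurableSet.compl ?_).inter (MeasurableSet.biInter Λ.countable_toSet fun y _ => ?_)
      · exact measurableSet_eq_fun (hcoord x) (hcoordξ x)
      · by_cases hyx : y = x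
        · simp [hyx]
        · have : {ω | y ≠ x → η ω y = ξ ω y} = {ω | η ω y = ξ ω y} := by
            ext ω; simp [hyx]
          rw [this]
          exact measurableSet_eq_fun (hcoord y) (hcoordξ y)
    · have heq : {ω | Λ.filter (fun y => η ω y ≠ ξ ω y) = {x}} = ∅ := by
        ext ω
        simp only [Set.mem_setOf_eq, Set.mem_empty_iff_false, iff_false, hfilter ω x]
        tauto
      rw [heq]; exact MeasurableSet.empty
  have hmS : ∀ x : G, MeasurableSet (S x) := by
    intro x
    have : S x = Aη ∩ ((fun ω => Function.update (η ω) x (!(η ω x))) ⁻¹' A)ᶜ ∩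
        {ω | Λ.filter (fun y => η ω y ≠ ξ ω y) = {x}} := by
      ext ω
      simp only [hSdef, Set.mem_setOf_eq, Set.mem_inter_iff, Set.mem_compl_iff,
        Set.mem_preimage, hAηdef]
      tauto
    rw [this]
    exact ((hmAη.inter (hflip x hA).compl).inter (hmT x))
  -- key pointwise fact
  have hkey : ∀ x : G, ∀ ω : Ω', ξ ω ≤ η ω → ω ∈ S x → ω ∈ Aη \ Aξ := by
    intro x ω hle' ⟨h1, h2, h3⟩
    rw [hfilter ω x] at h3
    obtain ⟨hxΛ, hxne, -⟩ := h3
    refine ⟨h1, ?_⟩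
    intro hξA
    apply h2
    apply hincr hξA
    intro y
    by_cases hy : y = x
    · subst hy
      rw [Function.update_self]
      have hle'' := hle' y
      revert hxne hle''
      cases η ω y <;> cases ξ ω y <;> simp
    · rw [Function.update_of_ne hy]
      exact hle' y
  -- the null set
  set N : Set Ω' := {ω | ¬ ξ ω ≤ η ω} with hNdef
  have hPN : P N = 0 := by
    have := (ae_iff (p := fun ω => ξ ω ≤ η ω)).mp hle
    simpa [hNdef] using this
  -- disjointness
  have hdisj : (↑Λ : Set G).PairwiseDisjoint S := by
    intro x hx y hy hxy
    refine Set.disjoint_left.mpr ?_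
    rintro ω ⟨-, -, h3⟩ ⟨-, -, h3'⟩
    apply hxy
    have := h3.symm.trans h3'
    exact Finset.singleton_injective this
  -- main chain in ℝ≥0∞
  have hsum : ∑ x ∈ Λ, P (S x) = P (⋃ x ∈ Λ, S x) :=
    (measure_biUnion_finset hdisj fun x _ => hmS x).symm
  have hsub : (⋃ x ∈ Λ, S x) ⊆ (Aη \ Aξ) ∪ N := by
    intro ω hω
    simp only [Set.mem_iUnion] at hω
    obtain ⟨x, hx, hωS⟩ := hω
    by_cases hωN : ξ ω ≤ η ω
    · exact Or.inl (hkey x ω hωN hωS)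
    · exact Or.inr hωN
  have h1 : ∑ x ∈ Λ, P (S x) ≤ P (Aη \ Aξ) := by
    rw [hsum]
    calc P (⋃ x ∈ Λ, S x) ≤ P ((Aη \ Aξ) ∪ N) := measure_mono hsub
      _ ≤ P (Aη \ Aξ) + P N := measure_union_le _ _
      _ = P (Aη \ Aξ) := by rw [hPN, add_zero]
  have h2 : P Aξ ≤ P (Aη ∩ Aξ) := by
    have : Aξ ⊆ (Aη ∩ Aξ) ∪ N := by
      intro ω hω
      by_cases hωN : ξ ω ≤ η ω
      · exact Or.inl ⟨hincr hω hωN, hω⟩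
      · exact Or.inr hωN
    calc P Aξ ≤ P ((Aη ∩ Aξ) ∪ N) := measure_mono this
      _ ≤ P (Aη ∩ Aξ) + P N := measure_union_le _ _
      _ = P (Aη ∩ Aξ) := by rw [hPN, add_zero]
  have h3 : P (Aη \ Aξ) + P (Aη ∩ Aξ) = P Aη := by
    rw [← measure_union (Disjoint.mono_right Set.inter_subset_right Set.disjoint_sdiff_left)
      (hmAη.inter hmAξ)]
    congr 1
    rw [Set.diff_union_inter]
  have hmain : ∑ x ∈ Λ, P (S x) + P Aξ ≤ P Aη := by
    calc ∑ x ∈ Λ, P (S x) + P Aξ ≤ P (Aη \ Aξ) + P (Aη ∩ Aξ) := add_le_add h1 h2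
      _ = P Aη := h3
  -- convert to reals
  have hfin : ∀ s : Set Ω', P s ≠ ⊤ := fun s => measure_ne_top P s
  have hsumR : ∑ x ∈ Λ, (P (S x)).toReal = (∑ x ∈ Λ, P (S x)).toReal := by
    rw [ENNReal.toReal_sum]
    intro x _
    exact hfin _
  have hmainR : (∑ x ∈ Λ, P (S x)).toReal + (P Aξ).toReal ≤ (P Aη).toReal := by
    rw [← ENNReal.toReal_add (by exact (ENNReal.sum_lt_top.mpr fun x _ => (hfin _).lt_top).ne) (hfin _)]
    exact ENNReal.toReal_mono (hfin _) hmain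
  have : ∑ x ∈ Λ, (P (S x)).toReal ≤ (P Aη).toReal - (P Aξ).toReal := by
    rw [hsumR]; linarith
  exact this
end
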